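/- arXiv:1403.3037 — 10 statements merged into one kernel-verified Lean document; each statement's English description precedes it below -/
import Mathlib

section
/- Let ℓ be a prime and let γ ∈ GSp₄(F_ℓ) be an element whose characteristic polynomial is irreducible over F_ℓ. Then the centralizer of γ in GSp₄(F_ℓ) has order (ℓ²+1)(ℓ−1). -/
open Matrix Polynomial

noncomputable section

/-- The standard symplectic form matrix `J = [[0, I₂], [−I₂, 0]]`. -/
def J4 (k : Type*) [CommRing k] : Matrix (Fin 4) (Fin 4) k :=
  !![0,0,1,0; 0,0,0,1; -1,0,0,0; 0,-1,0,0]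

/-- `γ` is a symplectic similitude with multiplier `m`. -/
def InGSp4 {k : Type*} [CommRing k] (m : k) (γ : Matrix (Fin 4) (Fin 4) k) : Prop :=
  IsUnit γ ∧ IsUnit m ∧ γ.transpose * J4 k * γ = m • J4 k

/-- The order of the centralizer of `γ` in `GSp₄`. -/
def centOrder {k : Type*} [CommRing k] (γ : Matrix (Fin 4) (Fin 4) k) : ℕ :=
  Nat.card {δ : Matrix (Fin 4) (Fin 4) k // (∃ m, InGSp4 m δ) ∧ δ * γ = γ * δ}

/-- `γ` is cyclic: its minimal polynomial equals its characteristic polynomial. -/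
def IsCyclicMat {k : Type*} [Field k] (γ : Matrix (Fin 4) (Fin 4) k) : Prop :=
  minpoly k γ = γ.charpoly

/-!
Since `charpoly γ` is irreducible of degree 4, `K = F[X]/(charpoly γ)` is a field with `q⁴`
elements, and `φ : K → M₄(F)`, `X ↦ γ`, maps it onto the centralizer of `γ` (the space `F⁴` is a
one-dimensional `K`-vector space). The adjoint `A ↦ J⁻¹ Aᵀ J` of the symplectic form preserves
this centralizer, because `γ^* = m γ⁻¹`; on the field `K` it is an involution, nontrivial since
`γ^* = γ` would force `γ² = m`, hence it is the Frobenius `a ↦ a ^ q²`. So `φ a` is a similitude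
iff `φ(a)^* φ(a) = φ(a ^ (q² + 1))` is a nonzero scalar, i.e. iff `a ^ ((q² + 1)(q - 1)) = 1`,
and this equation has `(q² + 1)(q - 1)` solutions in the cyclic group `Kˣ` of order `q⁴ - 1`.
-/

namespace FiniteField

variable {K : Type*} [Field K] [Finite K]

theorem ncard_pow_eq_one {d : ℕ} (hd : d ∣ Nat.card K - 1) : {a : K | a ^ d = 1}.ncard = d := by
  have hd0 : d ≠ 0 := by
    rintro rfl
    have := Finite.one_lt_card (α := K)
    rw [zero_dvd_iff] at hd
    omega
  have hroots : {a : K | a ^ d = 1} = Units.val '' ((powMonoidHom d : Kˣ →* Kˣ).ker : Set Kˣ) := by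
    ext a
    refine ⟨fun ha ↦ ⟨(IsUnit.of_pow_eq_one ha hd0).unit, ?_, rfl⟩, ?_⟩
    · simpa [Units.ext_iff] using ha
    · rintro ⟨u, hu, rfl⟩
      simpa [Units.ext_iff] using hu
  rw [hroots, Set.ncard_image_of_injective _ Units.val_injective, ← Nat.card_coe_set_eq,
    SetLike.coe_sort_coe, IsCyclic.card_powMonoidHom_ker, Nat.card_units, Nat.gcd_eq_right hd]

variable {F : Type*} [Field F] [Fintype F] [Algebra F K]

theorem exists_algebraMap_eq_of_pow_eq_one {x : K} (hx : x ^ (Fintype.card F - 1) = 1) :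
    ∃ c ≠ 0, algebraMap F K c = x := by
  have hsub : algebraMap F K '' {0}ᶜ ⊆ {x : K | x ^ (Fintype.card F - 1) = 1} := by
    rintro _ ⟨c, hc, rfl⟩
    simp [← map_pow, pow_card_sub_one_eq_one c hc]
  have hdvd : Fintype.card F - 1 ∣ Nat.card K - 1 := by
    rw [Module.natCard_eq_pow_finrank (K := F), Nat.card_eq_fintype_card]
    exact Nat.sub_one_dvd_pow_sub_one _ _
  have hcard : {x : K | x ^ (Fintype.card F - 1) = 1}.ncard ≤ (algebraMap F K '' {0}ᶜ).ncard := by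
    rw [ncard_pow_eq_one hdvd, Set.ncard_image_of_injective _ (algebraMap F K).injective,
      Set.ncard_compl, Set.ncard_singleton, Nat.card_eq_fintype_card]
  obtain ⟨c, hc, rfl⟩ : x ∈ algebraMap F K '' {0}ᶜ := by
    rwa [Set.eq_of_subset_of_ncard_le hsub hcard]
  exact ⟨c, hc, rfl⟩

theorem algHom_apply_eq_pow_of_mul_self_eq_one {σ : K →ₐ[F] K} (hσ : σ * σ = 1) (hσ1 : σ ≠ 1)
    {n : ℕ} (hn : Module.finrank F K = 2 * n) (x : K) : σ x = x ^ Fintype.card F ^ n := by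
  -- `σ = Frob ^ k` with `k < 2n`, and the Frobenius has order `2n`
  obtain ⟨⟨k, hk⟩, rfl⟩ := (bijective_frobeniusAlgHom_pow F K).2 σ
  have hk0 : k ≠ 0 := by
    rintro rfl
    exact hσ1 (pow_zero _)
  obtain ⟨j, hj⟩ : 2 * n ∣ k + k := by
    rw [← hn, ← orderOf_frobeniusAlgHom]
    exact orderOf_dvd_of_pow_eq_one (by rwa [pow_add])
  obtain rfl : k = n := by
    rw [hn] at hk
    rcases j with _ | _ | j <;> [omega; omega; nlinarith]
  simp [AlgHom.coe_pow, coe_frobeniusAlgHom, pow_iterate]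

end FiniteField

namespace Matrix

variable {F : Type*} [Field F] {n : Type*} [Fintype n] [DecidableEq n] (γ : Matrix n n F)

instance : Module.Finite F (AdjoinRoot γ.charpoly) :=
  γ.charpoly_monic.finite_adjoinRoot

instance [Finite F] : Finite (AdjoinRoot γ.charpoly) :=
  Module.finite_of_finite F

def liftCharpolyRoot : AdjoinRoot γ.charpoly →ₐ[F] Matrix n n F :=
  Ideal.Quotient.liftₐ _ (aeval γ) fun q hq ↦ by
    obtain ⟨c, rfl⟩ := Ideal.mem_span_singleton'.1 hq
    rw [map_mul, aeval_self_charpoly, mul_zero]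

theorem liftCharpolyRoot_mk (q : F[X]) : γ.liftCharpolyRoot (AdjoinRoot.mk _ q) = aeval γ q :=
  rfl

@[simp]
theorem liftCharpolyRoot_root : γ.liftCharpolyRoot (AdjoinRoot.root _) = γ :=
  aeval_X γ

theorem commute_liftCharpolyRoot {δ : Matrix n n F} (h : Commute δ γ)
    (a : AdjoinRoot γ.charpoly) : Commute δ (γ.liftCharpolyRoot a) := by
  obtain ⟨q, rfl⟩ := AdjoinRoot.mk_surjective a
  rw [liftCharpolyRoot_mk]
  exact Algebra.commute_of_mem_adjoin_singleton_of_commute (aeval_mem_adjoin_singleton F γ) h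

theorem finrank_adjoinRoot_charpoly :
    Module.finrank F (AdjoinRoot γ.charpoly) = Fintype.card n := by
  rw [← γ.charpoly_natDegree_eq_dim]
  exact finrank_quotient_span_eq_natDegree

variable [Fact (Irreducible γ.charpoly)] [Nonempty n]

theorem liftCharpolyRoot_injective : Function.Injective γ.liftCharpolyRoot :=
  γ.liftCharpolyRoot.toRingHom.injective

theorem exists_liftCharpolyRoot_eq_of_commute {δ : Matrix n n F} (h : Commute δ γ) :
    ∃ a, γ.liftCharpolyRoot a = δ := by
  set φ := γ.liftCharpolyRoot
  set v : n → F := Pi.single (Classical.arbitrary n) 1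
  let θ : AdjoinRoot γ.charpoly →ₗ[F] n → F :=
    LinearMap.applyₗ v ∘ₗ Matrix.toLinAlgEquiv'.toLinearMap ∘ₗ φ.toLinearMap
  have hθ (a) : θ a = φ a *ᵥ v := rfl
  have hθ_inj : Function.Injective θ := by
    rw [← LinearMap.ker_eq_bot, LinearMap.ker_eq_bot']
    intro a ha
    by_contra ha0
    have hv : v = φ a⁻¹ *ᵥ θ a := by
      rw [hθ, mulVec_mulVec, ← map_mul, inv_mul_cancel₀ ha0, map_one, one_mulVec]
    rw [ha, mulVec_zero] at hv
    simpa [v] using congrFun hv (Classical.arbitrary n)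
  have hθ_surj : Function.Surjective θ :=
    (LinearMap.injective_iff_surjective_of_finrank_eq_finrank
      (by rw [finrank_adjoinRoot_charpoly, Module.finrank_fintype_fun_eq_card])).1 hθ_inj
  obtain ⟨a, ha⟩ := hθ_surj (δ *ᵥ v)
  refine ⟨a, ext_iff_mulVec.2 fun w ↦ ?_⟩
  obtain ⟨b, rfl⟩ := hθ_surj w
  calc φ a *ᵥ (φ b *ᵥ v) = φ b *ᵥ (φ a *ᵥ v) := by
        rw [mulVec_mulVec, mulVec_mulVec, ← map_mul, ← map_mul, mul_comm]
    _ = δ *ᵥ (φ b *ᵥ v) := by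
        rw [← hθ, ha, mulVec_mulVec, mulVec_mulVec, (commute_liftCharpolyRoot γ h b).eq]

end Matrix

section Symplectic

variable {k : Type*} [CommRing k]

theorem J4_mul_self : J4 k * J4 k = -1 := by
  ext i j
  fin_cases i <;> fin_cases j <;> simp [J4, mul_apply, Fin.sum_univ_four]

theorem J4_transpose : (J4 k)ᵀ = -J4 k := by
  ext i j
  fin_cases i <;> fin_cases j <;> simp [J4]

/-- `J⁻¹ Aᵀ J`, written using `J⁻¹ = -J`. -/
def symplecticAdjoint (A : Matrix (Fin 4) (Fin 4) k) : Matrix (Fin 4) (Fin 4) k :=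
  -(J4 k * Aᵀ * J4 k)

theorem symplecticAdjoint_mul (A B : Matrix (Fin 4) (Fin 4) k) :
    symplecticAdjoint (A * B) = symplecticAdjoint B * symplecticAdjoint A := by
  calc symplecticAdjoint (A * B) = -(J4 k * Bᵀ * (-(J4 k * J4 k)) * Aᵀ * J4 k) := by
        rw [symplecticAdjoint, J4_mul_self, transpose_mul]; noncomm_ring
    _ = _ := by simp only [symplecticAdjoint]; noncomm_ring

theorem symplecticAdjoint_symplecticAdjoint (A : Matrix (Fin 4) (Fin 4) k) :
    symplecticAdjoint (symplecticAdjoint A) = A := by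
  calc symplecticAdjoint (symplecticAdjoint A) = (J4 k * J4 k) * A * (J4 k * J4 k) := by
        simp only [symplecticAdjoint, transpose_neg, transpose_mul, transpose_transpose,
          J4_transpose]
        noncomm_ring
    _ = A := by rw [J4_mul_self]; noncomm_ring

theorem symplecticAdjoint_add (A B : Matrix (Fin 4) (Fin 4) k) :
    symplecticAdjoint (A + B) = symplecticAdjoint A + symplecticAdjoint B := by
  simp only [symplecticAdjoint, transpose_add]; noncomm_ring

theorem symplecticAdjoint_smul (c : k) (A : Matrix (Fin 4) (Fin 4) k) :
    symplecticAdjoint (c • A) = c • symplecticAdjoint A := by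
  simp only [symplecticAdjoint, transpose_smul, Matrix.mul_smul, Matrix.smul_mul, smul_neg]

theorem symplecticAdjoint_one : symplecticAdjoint (1 : Matrix (Fin 4) (Fin 4) k) = 1 := by
  rw [symplecticAdjoint, transpose_one, mul_one, J4_mul_self, neg_neg]

theorem inGSp4_iff {m : k} {A : Matrix (Fin 4) (Fin 4) k} :
    InGSp4 m A ↔ IsUnit m ∧ symplecticAdjoint A * A = m • 1 := by
  have hJ : Function.Injective fun B : Matrix (Fin 4) (Fin 4) k ↦ -(J4 k * B) :=
    fun B C h ↦ by simpa [← mul_assoc, J4_mul_self] using congrArg (J4 k * ·) h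
  have hA : symplecticAdjoint A * A = -(J4 k * (Aᵀ * J4 k * A)) := by
    simp only [symplecticAdjoint]; noncomm_ring
  have hmJ : m • (1 : Matrix (Fin 4) (Fin 4) k) = -(J4 k * (m • J4 k)) := by
    rw [Matrix.mul_smul, J4_mul_self, smul_neg, neg_neg]
  rw [InGSp4, hA, hmJ, hJ.eq_iff]
  refine ⟨fun ⟨_, hm, h⟩ ↦ ⟨hm, h⟩, fun ⟨hm, h⟩ ↦ ⟨?_, hm, h⟩⟩
  refine isUnit_iff_exists_inv'.2 ⟨hm.unit⁻¹.val • symplecticAdjoint A, ?_⟩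
  rw [Matrix.smul_mul, hA, hJ.eq_iff.2 h, ← hmJ, smul_smul, hm.val_inv_mul, one_smul]

end Symplectic

section Involution

variable {F : Type*} [Field F] {γ : Matrix (Fin 4) (Fin 4) F} {m : F}

theorem commute_symplecticAdjoint (hγ : InGSp4 m γ) {δ : Matrix (Fin 4) (Fin 4) F}
    (h : Commute δ γ) : Commute (symplecticAdjoint δ) γ := by
  obtain ⟨hm, hγm⟩ := inGSp4_iff.1 hγ
  have hinv : (m⁻¹ • symplecticAdjoint γ) * γ = 1 := by
    rw [Matrix.smul_mul, hγm, smul_smul, inv_mul_cancel₀ hm.ne_zero, one_smul]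
  let u : (Matrix (Fin 4) (Fin 4) F)ˣ := ⟨γ, _, mul_eq_one_comm.1 hinv, hinv⟩
  have h' : Commute (symplecticAdjoint δ) (symplecticAdjoint γ) := by
    simp only [Commute, SemiconjBy, ← symplecticAdjoint_mul, h.eq]
  exact Commute.units_inv_right_iff (u := u).1 (h'.smul_right m⁻¹)

variable [Fact (Irreducible γ.charpoly)]

theorem exists_liftCharpolyRoot_eq_symplecticAdjoint (hγ : InGSp4 m γ)
    (a : AdjoinRoot γ.charpoly) :
    ∃ b, γ.liftCharpolyRoot b = symplecticAdjoint (γ.liftCharpolyRoot a) :=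
  γ.exists_liftCharpolyRoot_eq_of_commute <|
    commute_symplecticAdjoint hγ (γ.commute_liftCharpolyRoot (Commute.refl γ) a).symm

def symplecticInvolution (hγ : InGSp4 m γ) : AdjoinRoot γ.charpoly →ₐ[F] AdjoinRoot γ.charpoly :=
  have spec a : γ.liftCharpolyRoot (Function.invFun γ.liftCharpolyRoot
      (symplecticAdjoint (γ.liftCharpolyRoot a))) = symplecticAdjoint (γ.liftCharpolyRoot a) :=
    Function.invFun_eq (exists_liftCharpolyRoot_eq_symplecticAdjoint hγ a)
  AlgHom.ofLinearMap
    { toFun a := Function.invFun γ.liftCharpolyRoot (symplecticAdjoint (γ.liftCharpolyRoot a))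
      map_add' a b := γ.liftCharpolyRoot_injective <| by
        rw [spec, map_add, map_add, spec, spec, symplecticAdjoint_add]
      map_smul' c a := γ.liftCharpolyRoot_injective <| by
        rw [spec, map_smul, map_smul, spec, symplecticAdjoint_smul, RingHom.id_apply] }
    (γ.liftCharpolyRoot_injective <| by
      rw [LinearMap.coe_mk, AddHom.coe_mk, spec, map_one, symplecticAdjoint_one])
    -- the anti-automorphism `^*` is multiplicative on the commutative algebra `F[γ]`
    fun a b ↦ γ.liftCharpolyRoot_injective <| by
      rw [LinearMap.coe_mk, AddHom.coe_mk, map_mul _ (Function.invFun _ _), spec, spec, spec,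
        ← symplecticAdjoint_mul, ← map_mul, mul_comm]

theorem liftCharpolyRoot_symplecticInvolution (hγ : InGSp4 m γ) (a : AdjoinRoot γ.charpoly) :
    γ.liftCharpolyRoot (symplecticInvolution hγ a) = symplecticAdjoint (γ.liftCharpolyRoot a) :=
  Function.invFun_eq (exists_liftCharpolyRoot_eq_symplecticAdjoint hγ a)

theorem symplecticInvolution_mul_self (hγ : InGSp4 m γ) :
    symplecticInvolution hγ * symplecticInvolution hγ = 1 :=
  AlgHom.ext fun a ↦ γ.liftCharpolyRoot_injective <| by
    rw [AlgHom.mul_apply, liftCharpolyRoot_symplecticInvolution,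
      liftCharpolyRoot_symplecticInvolution, symplecticAdjoint_symplecticAdjoint, AlgHom.one_apply]

theorem symplecticInvolution_ne_one (hγ : InGSp4 m γ) : symplecticInvolution hγ ≠ 1 := by
  intro h
  obtain ⟨hm, hγm⟩ := inGSp4_iff.1 hγ
  set r := AdjoinRoot.root γ.charpoly
  -- otherwise `γ^* = γ`, so `γ² = m` and the quartic `charpoly γ` would divide `X² - m`
  have hr : aeval r (X ^ 2 - C m) = 0 := by
    rw [map_sub, aeval_X_pow, aeval_C, sub_eq_zero]
    refine γ.liftCharpolyRoot_injective ?_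
    have hγ_self := liftCharpolyRoot_symplecticInvolution hγ r
    rw [h, AlgHom.one_apply, liftCharpolyRoot_root] at hγ_self
    rw [map_pow, liftCharpolyRoot_root, AlgHom.commutes, Algebra.algebraMap_eq_smul_one, ← hγm,
      ← hγ_self, sq]
  have hdvd : γ.charpoly ∣ X ^ 2 - C m := by
    simpa [r, AdjoinRoot.minpoly_root γ.charpoly_monic.ne_zero, γ.charpoly_monic.leadingCoeff]
      using minpoly.dvd F r hr
  have hdeg := natDegree_le_of_dvd hdvd (X_pow_sub_C_ne_zero two_pos m)
  rw [charpoly_natDegree_eq_dim, natDegree_X_pow_sub_C, Fintype.card_fin] at hdeg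
  omega

end Involution

section Counting

variable {F : Type*} [Field F] [Fintype F] {γ : Matrix (Fin 4) (Fin 4) F} {m : F}
  [Fact (Irreducible γ.charpoly)]

theorem symplecticInvolution_apply (hγ : InGSp4 m γ) (a : AdjoinRoot γ.charpoly) :
    symplecticInvolution hγ a = a ^ Fintype.card F ^ 2 :=
  FiniteField.algHom_apply_eq_pow_of_mul_self_eq_one (symplecticInvolution_mul_self hγ)
    (symplecticInvolution_ne_one hγ) (by rw [γ.finrank_adjoinRoot_charpoly, Fintype.card_fin]) a

theorem exists_inGSp4_liftCharpolyRoot_iff (hγ : InGSp4 m γ) (a : AdjoinRoot γ.charpoly) :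
    (∃ m', InGSp4 m' (γ.liftCharpolyRoot a)) ↔
      a ^ ((Fintype.card F ^ 2 + 1) * (Fintype.card F - 1)) = 1 := by
  have hnorm (m' : F) : symplecticAdjoint (γ.liftCharpolyRoot a) * γ.liftCharpolyRoot a = m' • 1 ↔
      a ^ (Fintype.card F ^ 2 + 1) = algebraMap F _ m' := by
    rw [← liftCharpolyRoot_symplecticInvolution hγ, ← map_mul, symplecticInvolution_apply,
      ← pow_succ, ← Algebra.algebraMap_eq_smul_one, ← AlgHom.commutes γ.liftCharpolyRoot,
      γ.liftCharpolyRoot_injective.eq_iff]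
  simp only [inGSp4_iff, hnorm, isUnit_iff_ne_zero, pow_mul]
  constructor
  · rintro ⟨m', hm', h⟩
    rw [h, ← map_pow, FiniteField.pow_card_sub_one_eq_one m' hm', map_one]
  · intro h
    obtain ⟨c, hc, h⟩ := FiniteField.exists_algebraMap_eq_of_pow_eq_one h
    exact ⟨c, hc, h.symm⟩

theorem centOrder_eq_of_irreducible_charpoly (hγ : InGSp4 m γ) :
    centOrder γ = (Fintype.card F ^ 2 + 1) * (Fintype.card F - 1) := by
  have hcent : {δ | (∃ m, InGSp4 m δ) ∧ δ * γ = γ * δ} = γ.liftCharpolyRoot ''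
      {a | a ^ ((Fintype.card F ^ 2 + 1) * (Fintype.card F - 1)) = 1} := by
    ext δ
    constructor
    · rintro ⟨hδ, hcomm⟩
      obtain ⟨a, rfl⟩ := γ.exists_liftCharpolyRoot_eq_of_commute hcomm
      exact ⟨a, (exists_inGSp4_liftCharpolyRoot_iff hγ a).1 hδ, rfl⟩
    · rintro ⟨a, ha, rfl⟩
      exact ⟨(exists_inGSp4_liftCharpolyRoot_iff hγ a).2 ha,
        (γ.commute_liftCharpolyRoot (Commute.refl γ) a).symm.eq⟩
  have hq : 1 ≤ Fintype.card F := Fintype.card_pos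
  have hdvd : (Fintype.card F ^ 2 + 1) * (Fintype.card F - 1) ∣
      Nat.card (AdjoinRoot γ.charpoly) - 1 := by
    rw [Module.natCard_eq_pow_finrank (K := F), finrank_adjoinRoot_charpoly, Fintype.card_fin,
      Nat.card_eq_fintype_card]
    refine ⟨Fintype.card F + 1, ?_⟩
    zify [hq, Nat.one_le_pow 4 _ hq]
    ring
  rw [centOrder, ← Set.coe_ofPred, Nat.card_coe_set_eq, hcent,
    Set.ncard_image_of_injective _ γ.liftCharpolyRoot_injective, FiniteField.ncard_pow_eq_one hdvd]

end Counting

theorem stmt3_general (ℓ : ℕ) [Fact ℓ.Prime]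
    (γ : Matrix (Fin 4) (Fin 4) (ZMod ℓ)) (m : ZMod ℓ) (hγ : InGSp4 m γ)
    (hirr : Irreducible γ.charpoly) :
    centOrder γ = (ℓ ^ 2 + 1) * (ℓ - 1) := by
  have := Fact.mk hirr
  simpa [ZMod.card] using centOrder_eq_of_irreducible_charpoly hγ

theorem stmt3 (ℓ : ℕ) (hℓ : ℓ.Prime) [Fact ℓ.Prime]
    (γ : Matrix (Fin 4) (Fin 4) (ZMod ℓ)) (m : ZMod ℓ) (hγ : InGSp4 m γ)
    (hirr : Irreducible γ.charpoly) :
    centOrder γ = (ℓ ^ 2 + 1) * (ℓ - 1) :=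
  stmt3_general ℓ γ m hγ hirr
end
end

section
/- Let ℓ be an odd prime, a ∈ F_ℓˣ, and let γ ∈ GSp₄(F_ℓ) be a cyclic element with characteristic polynomial (T−a)²(T+a)² and multiplier m(γ) = a². Then the centralizer of γ in GSp₄(F_ℓ) has order 2ℓ²(ℓ−1). -/
/-!
Since `γ` is cyclic, its centralizer in the matrix algebra is `k[γ] ≅ k[X]/(u²)`, where
`u = X² - c` and `c = a²`; every element is `x + yγ + (z + wγ)u(γ)` for unique `x, y, z, w`.
The relation `γᵀ J γ = c J` says that the adjoint `δ ↦ J⁻¹ δᵀ J` sends `γ` to `c γ⁻¹`, so on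
`k[γ]` it is the involution `ι : X ↦ c / X = X - c⁻¹ X u`, with `ι(u) = -u`. A polynomial `δ` in
`γ` is a similitude with multiplier `m` iff `ι(δ) δ = m`, and for `δ = x + yX + (z + wX)u`
  `ι(δ) δ = x² + c y² + 2xy X - c⁻¹ xy X u`,
which is a nonzero scalar iff `xy = 0` and `(x, y) ≠ 0`. This leaves `2(ℓ - 1)` choices of
`(x, y)` and `ℓ²` of `(z, w)`.

The centralizer is `k[γ]` because `γ` has a cyclic vector: as `a ≠ -a`, adding vectors whose
annihilators are `(X - a)²` and `(X + a)²` gives one whose annihilator is the minimal polynomial.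
-/

open Matrix Polynomial

noncomputable section

namespace Matrix

variable {n : Type*} [Fintype n] [DecidableEq n]

theorem exists_eq_aeval_of_commute {R : Type*} [CommRing R] {γ δ : Matrix n n R} {v : n → R}
    (hv : ∀ w, ∃ q : R[X], w = aeval γ q *ᵥ v) (hδ : Commute δ γ) :
    ∃ p : R[X], δ = aeval γ p := by
  have hcomm (q : R[X]) : Commute δ (aeval γ q) := by
    induction q using Polynomial.induction_on' with
    | add p q hp hq => simpa using hp.add_right hq
    | monomial n c =>
      simpa [aeval_monomial, ← Algebra.smul_def] using (hδ.pow_right n).smul_right c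
  obtain ⟨p, hp⟩ := hv (δ *ᵥ v)
  refine ⟨p, toLin'.injective <| LinearMap.ext fun w => ?_⟩
  obtain ⟨q, rfl⟩ := hv w
  simp only [toLin'_apply, mulVec_mulVec]
  rw [(hcomm q).eq, ← mulVec_mulVec, hp, mulVec_mulVec, ← map_mul, mul_comm, map_mul]

variable {k : Type*} [Field k] {γ : Matrix n n k}

theorem exists_eq_aeval_mulVec {μ : k[X]} (hμ : μ.degree = Fintype.card n) {v : n → k}
    (hv : ∀ q, aeval γ q *ᵥ v = 0 → μ ∣ q) (w : n → k) : ∃ q : k[X], w = aeval γ q *ᵥ v := by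
  let f : degreeLT k (Fintype.card n) →ₗ[k] n → k :=
    { toFun q := aeval γ (q : k[X]) *ᵥ v
      map_add' p q := by simp [add_mulVec]
      map_smul' c q := by simp [smul_mulVec] }
  have hf : Function.Injective f := by
    refine (injective_iff_map_eq_zero f).2 fun q hq => Subtype.ext ?_
    exact eq_zero_of_dvd_of_degree_lt (hv q hq) (hμ ▸ mem_degreeLT.1 q.2)
  have hfin : Module.finrank k (degreeLT k (Fintype.card n)) = Module.finrank k (n → k) := by
    simp [(degreeLTEquiv k _).finrank_eq]
  obtain ⟨q, rfl⟩ := (LinearMap.injective_iff_surjective_of_finrank_eq_finrank hfin).1 hf w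
  exact ⟨q, rfl⟩

theorem sq_X_sub_C_dvd_of_aeval_mulVec_eq_zero {b : k} {v : n → k}
    (h₁ : aeval γ (X - C b) *ᵥ v ≠ 0) (h₂ : aeval γ ((X - C b) ^ 2) *ᵥ v = 0) {r : k[X]}
    (hr : aeval γ r *ᵥ v = 0) : (X - C b) ^ 2 ∣ r := by
  obtain ⟨s, hs⟩ := X_sub_C_dvd_sub_C_eval (a := b) (p := r)
  obtain ⟨t, ht⟩ := X_sub_C_dvd_sub_C_eval (a := b) (p := s)
  set c₀ := r.eval b
  set c₁ := s.eval b
  have hr' : r = t * (X - C b) ^ 2 + C c₁ * (X - C b) + C c₀ := by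
    linear_combination hs + (X - C b) * ht
  set N := aeval γ (X - C b)
  have hN : N *ᵥ (N *ᵥ v) = 0 := by rwa [mulVec_mulVec, ← map_mul, ← sq]
  have hrv : c₁ • (N *ᵥ v) + c₀ • v = 0 := by
    rw [← hr, hr']
    simp only [map_add, map_mul, aeval_C, add_mulVec, ← mulVec_mulVec, h₂, mulVec_zero, zero_add,
      Algebra.algebraMap_eq_smul_one, smul_mulVec, one_mulVec, N]
  have hrb : c₀ = 0 := by
    have := congrArg (N *ᵥ ·) hrv
    simp only [mulVec_add, mulVec_smul, hN, smul_zero, zero_add, mulVec_zero] at this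
    exact (smul_eq_zero.1 this).resolve_right h₁
  have hsb : c₁ = 0 := by
    rw [hrb, zero_smul, add_zero] at hrv
    exact (smul_eq_zero.1 hrv).resolve_right h₁
  rw [hr', hrb, hsb]
  simp

theorem exists_mulVec_forall_sq_X_sub_C_dvd {b : k} {Q : k[X]}
    (hγ : minpoly k γ = (X - C b) ^ 2 * Q) :
    ∃ v : n → k, aeval γ ((X - C b) ^ 2) *ᵥ v = 0 ∧
      ∀ r, aeval γ r *ᵥ v = 0 → (X - C b) ^ 2 ∣ r := by
  have hμ : minpoly k γ ≠ 0 := minpoly.ne_zero (Algebra.IsIntegral.isIntegral γ)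
  have hQ : Q ≠ 0 := by rintro rfl; simp [hγ] at hμ
  have hne : aeval γ ((X - C b) * Q) ≠ 0 := by
    rw [Ne, ← minpoly.dvd_iff]
    intro hdvd
    have := natDegree_le_of_dvd hdvd (mul_ne_zero (X_sub_C_ne_zero b) hQ)
    rw [hγ, natDegree_mul (pow_ne_zero 2 (X_sub_C_ne_zero b)) hQ,
      natDegree_mul (X_sub_C_ne_zero b) hQ] at this
    simp at this
  obtain ⟨w, hw⟩ : ∃ w, aeval γ ((X - C b) * Q) *ᵥ w ≠ 0 := by
    by_contra! h
    exact hne (toLin'.injective (LinearMap.ext fun w => by rw [toLin'_apply, h, map_zero]; rfl))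
  have hv : aeval γ ((X - C b) ^ 2) *ᵥ (aeval γ Q *ᵥ w) = 0 := by
    rw [mulVec_mulVec, ← map_mul, ← hγ, minpoly.aeval, zero_mulVec]
  refine ⟨aeval γ Q *ᵥ w, hv, fun r hr => sq_X_sub_C_dvd_of_aeval_mulVec_eq_zero ?_ hv hr⟩
  rwa [mulVec_mulVec, ← map_mul]

theorem mul_dvd_of_aeval_mulVec_add_eq_zero {P Q : k[X]} (hPQ : IsCoprime P Q) {v w : n → k}
    (hPv : aeval γ P *ᵥ v = 0) (hv : ∀ r, aeval γ r *ᵥ v = 0 → P ∣ r)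
    (hQw : aeval γ Q *ᵥ w = 0) (hw : ∀ r, aeval γ r *ᵥ w = 0 → Q ∣ r) {r : k[X]}
    (hr : aeval γ r *ᵥ (v + w) = 0) : P * Q ∣ r := by
  have key {P Q : k[X]} {v w : n → k} (hPQ : IsCoprime P Q) (hQw : aeval γ Q *ᵥ w = 0)
      (hv : ∀ r, aeval γ r *ᵥ v = 0 → P ∣ r) (hr : aeval γ r *ᵥ (v + w) = 0) : P ∣ r := by
    have hw : aeval γ (r * Q) *ᵥ w = 0 := by rw [map_mul, ← mulVec_mulVec, hQw, mulVec_zero]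
    have h : aeval γ (r * Q) *ᵥ (v + w) = 0 := by
      rw [mul_comm, map_mul, ← mulVec_mulVec, hr, mulVec_zero]
    rw [mulVec_add, hw, add_zero] at h
    exact hPQ.dvd_of_dvd_mul_right (hv _ h)
  exact hPQ.mul_dvd (key hPQ hQw hv hr) (key hPQ.symm hPv hw (by rwa [add_comm]))

theorem exists_eq_aeval_of_commute_of_minpoly_eq {a b : k} (hab : a ≠ b)
    (hn : Fintype.card n = 4) (hγ : minpoly k γ = (X - C a) ^ 2 * (X - C b) ^ 2)
    {δ : Matrix n n k} (hδ : Commute δ γ) : ∃ p : k[X], δ = aeval γ p := by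
  obtain ⟨v, hPv, hv⟩ := exists_mulVec_forall_sq_X_sub_C_dvd hγ
  obtain ⟨w, hQw, hw⟩ := exists_mulVec_forall_sq_X_sub_C_dvd (hγ.trans (mul_comm _ _))
  have hcop : IsCoprime ((X - C a) ^ 2) ((X - C b) ^ 2) :=
    (isCoprime_X_sub_C_of_isUnit_sub (sub_ne_zero.2 hab).isUnit).pow
  have hdeg : (minpoly k γ).degree = Fintype.card n := by
    rw [hγ, hn]
    compute_degree!
  exact exists_eq_aeval_of_commute (exists_eq_aeval_mulVec hdeg fun r hr =>
    hγ ▸ mul_dvd_of_aeval_mulVec_add_eq_zero hcop hPv hv hQw hw hr) hδ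

end Matrix

section Symplectic

variable {R : Type*} [CommRing R]

theorem J4_mul_J4 : J4 R * J4 R = -1 := by
  ext i j
  fin_cases i <;> fin_cases j <;> simp [J4, mul_apply, Fin.sum_univ_four]

theorem isUnit_J4 : IsUnit (J4 R) :=
  IsUnit.of_mul_eq_one (-J4 R) (by rw [mul_neg, J4_mul_J4, neg_neg])

/-- `J⁻¹ δᵀ J`, as `J⁻¹ = -J`. -/
def sympAdjoint (δ : Matrix (Fin 4) (Fin 4) R) : Matrix (Fin 4) (Fin 4) R :=
  -(J4 R * δᵀ * J4 R)

theorem J4_mul_sympAdjoint (δ : Matrix (Fin 4) (Fin 4) R) : J4 R * sympAdjoint δ = δᵀ * J4 R := by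
  rw [sympAdjoint, mul_neg, ← mul_assoc, ← mul_assoc, J4_mul_J4, neg_one_mul, neg_mul, neg_neg]

theorem transpose_mul_J4_mul_eq_smul_iff {δ : Matrix (Fin 4) (Fin 4) R} {m : R} :
    δᵀ * J4 R * δ = m • J4 R ↔ sympAdjoint δ * δ = m • 1 := by
  rw [← J4_mul_sympAdjoint, mul_assoc, ← mul_one (J4 R), ← mul_smul_comm, mul_one,
    isUnit_J4.mul_right_inj]

theorem sympAdjoint_add (A B : Matrix (Fin 4) (Fin 4) R) :
    sympAdjoint (A + B) = sympAdjoint A + sympAdjoint B := by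
  simp only [sympAdjoint, transpose_add, mul_add, add_mul, neg_add]

theorem sympAdjoint_smul (c : R) (A : Matrix (Fin 4) (Fin 4) R) :
    sympAdjoint (c • A) = c • sympAdjoint A := by
  simp [sympAdjoint]

theorem sympAdjoint_mul (A B : Matrix (Fin 4) (Fin 4) R) :
    sympAdjoint (A * B) = sympAdjoint B * sympAdjoint A := by
  simp only [sympAdjoint, transpose_mul, neg_mul_neg, mul_assoc]
  rw [← mul_assoc (J4 R) (J4 R), J4_mul_J4]
  simp

theorem sympAdjoint_pow (A : Matrix (Fin 4) (Fin 4) R) (n : ℕ) :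
    sympAdjoint (A ^ n) = sympAdjoint A ^ n := by
  induction n with
  | zero => simp [sympAdjoint, J4_mul_J4]
  | succ n ih => rw [pow_succ, sympAdjoint_mul, ih, pow_succ']

theorem sympAdjoint_aeval (A : Matrix (Fin 4) (Fin 4) R) (p : R[X]) :
    sympAdjoint (aeval A p) = aeval (sympAdjoint A) p := by
  induction p using Polynomial.induction_on' with
  | add p q hp hq => rw [map_add, map_add, sympAdjoint_add, hp, hq]
  | monomial n c =>
    rw [aeval_monomial, aeval_monomial, ← Algebra.smul_def, ← Algebra.smul_def, sympAdjoint_smul,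
      sympAdjoint_pow]

end Symplectic

section Coordinates

variable {k : Type*} [Field k]

theorem natDegree_sq_X_sq_sub_C (c : k) : ((X ^ 2 - C c) ^ 2).natDegree = 4 := by
  compute_degree!

/-- `σ(X) ≡ c / X` modulo `(X² - c)²`, since `σ X = c - c⁻¹ (X² - c)²`. -/
def sympAdjointPoly (c : k) : k[X] := X - C c⁻¹ * X * (X ^ 2 - C c)

/-- The element with coordinates `((x, y), (z, w))` in the basis `1, X, u, X u` of `k[X]/(u²)`,
where `u = X² - c`. -/
def coordPoly (c : k) (v : (k × k) × (k × k)) : k[X] :=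
  C v.1.1 + C v.1.2 * X + (C v.2.1 + C v.2.2 * X) * (X ^ 2 - C c)

theorem coordPoly_sub (c : k) (v w : (k × k) × (k × k)) :
    coordPoly c v - coordPoly c w = coordPoly c (v - w) := by
  simp only [coordPoly, Prod.fst_sub, Prod.snd_sub, map_sub]
  ring

theorem coordPoly_eq_toPoly (c x y z w : k) :
    coordPoly c ((x, y), (z, w)) = (⟨w, z, y - c * w, x - c * z⟩ : Cubic k).toPoly := by
  simp only [coordPoly, Cubic.toPoly, map_sub, map_mul]
  ring

theorem eq_zero_of_dvd_coordPoly {c : k} {v : (k × k) × (k × k)}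
    (h : (X ^ 2 - C c) ^ 2 ∣ coordPoly c v) : v = 0 := by
  obtain ⟨⟨x, y⟩, z, w⟩ := v
  rw [coordPoly_eq_toPoly] at h
  have hdeg : (Cubic.toPoly ⟨w, z, y - c * w, x - c * z⟩).natDegree <
      ((X ^ 2 - C c) ^ 2).natDegree := by
    rw [natDegree_sq_X_sq_sub_C]
    exact natDegree_cubic_le.trans_lt (by norm_num)
  obtain ⟨rfl, rfl, hy, hx⟩ : w = 0 ∧ z = 0 ∧ y - c * w = 0 ∧ x - c * z = 0 :=
    Cubic.ext_iff.1 ((Cubic.toPoly_eq_zero_iff _).1 (eq_zero_of_dvd_of_natDegree_lt h hdeg))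
  rw [mul_zero, sub_zero] at hx hy
  rw [hx, hy]
  rfl

theorem exists_dvd_sub_coordPoly (c : k) (p : k[X]) :
    ∃ v, (X ^ 2 - C c) ^ 2 ∣ p - coordPoly c v := by
  have hmonic : ((X ^ 2 - C c) ^ 2).Monic := by monicity!
  have hq := natDegree_modByMonic_lt p hmonic fun h => by
    simpa [h] using natDegree_sq_X_sq_sub_C c
  rw [natDegree_sq_X_sq_sub_C] at hq
  set q := p %ₘ (X ^ 2 - C c) ^ 2
  refine ⟨((q.coeff 0 + c * q.coeff 2, q.coeff 1 + c * q.coeff 3), (q.coeff 2, q.coeff 3)), ?_⟩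
  have hq' : q = coordPoly c
      ((q.coeff 0 + c * q.coeff 2, q.coeff 1 + c * q.coeff 3), (q.coeff 2, q.coeff 3)) := by
    conv_lhs => rw [q.as_sum_range' 4 hq]
    simp only [coordPoly, map_add, map_mul, ← C_mul_X_pow_eq_monomial, Finset.sum_range_succ,
      Finset.range_one, Finset.sum_singleton, pow_zero, mul_one, pow_one]
    ring
  rw [← hq']
  exact ⟨_, sub_eq_iff_eq_add'.2 (modByMonic_add_div p _).symm⟩

/-- With `u = r² - c`, this is `ι(α) α` for `α = x + y r + (z + w r) u` and the involution
`ι : r ↦ σ = c / r`. -/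
theorem conj_mul_self_eq_of_sq_sub_sq_eq_zero {R : Type*} [CommRing R] {r c d σ : R}
    (hcd : c * d = 1) (hu : (r ^ 2 - c) ^ 2 = 0) (hσ : σ = r - d * r * (r ^ 2 - c))
    (x y z w : R) :
    (x + y * σ + (z + w * σ) * (σ ^ 2 - c)) * (x + y * r + (z + w * r) * (r ^ 2 - c)) =
      x ^ 2 + c * y ^ 2 + 2 * x * y * r + (0 + -(d * x * y) * r) * (r ^ 2 - c) := by
  subst hσ
  have hσu : (r - d * r * (r ^ 2 - c)) ^ 2 - c = -(r ^ 2 - c) := by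
    linear_combination (-2 * (r ^ 2 - c)) * hcd + (d ^ 2 * r ^ 2 - 2 * d) * hu
  linear_combination
    (z + w * (r - d * r * (r ^ 2 - c))) * (x + y * r + (z + w * r) * (r ^ 2 - c)) * hσu +
    (-y ^ 2 * (r ^ 2 - c)) * hcd +
    (d * w * r * (x + y * r + (z + w * r) * (r ^ 2 - c)) - (d * y * r + z + w * r) * (z + w * r) -
      d * y ^ 2) * hu

open AdjoinRoot in
theorem dvd_coordPoly_comp_mul_sub {c : k} (hc : c ≠ 0) (v : (k × k) × (k × k)) :
    (X ^ 2 - C c) ^ 2 ∣ (coordPoly c v).comp (sympAdjointPoly c) * coordPoly c v -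
      coordPoly c ((v.1.1 ^ 2 + c * v.1.2 ^ 2, 2 * v.1.1 * v.1.2),
        (0, -(c⁻¹ * v.1.1 * v.1.2))) := by
  rw [← mk_eq_mk]
  have hcd : AdjoinRoot.of ((X ^ 2 - C c) ^ 2) c * AdjoinRoot.of _ c⁻¹ = 1 := by
    rw [← map_mul, mul_inv_cancel₀ hc, map_one]
  have hu : (root ((X ^ 2 - C c) ^ 2) ^ 2 - AdjoinRoot.of _ c) ^ 2 = 0 := by
    rw [← mk_X, ← mk_C, ← map_pow, ← map_sub, ← map_pow, mk_self]
  simp only [coordPoly, sympAdjointPoly, add_comp, mul_comp, C_comp, X_comp, sub_comp, pow_comp,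
    map_add, map_mul, map_sub, map_pow, map_neg, mk_C, mk_X, map_ofNat, map_zero]
  linear_combination conj_mul_self_eq_of_sq_sub_sq_eq_zero hcd hu rfl (AdjoinRoot.of _ v.1.1)
    (AdjoinRoot.of _ v.1.2) (AdjoinRoot.of _ v.2.1) (AdjoinRoot.of _ v.2.2)

end Coordinates

section Centralizer

variable {k : Type*} [Field k]

theorem inGSp4_iff_sympAdjoint_mul_self {m : k} {δ : Matrix (Fin 4) (Fin 4) k} :
    InGSp4 m δ ↔ m ≠ 0 ∧ sympAdjoint δ * δ = m • 1 := by
  rw [InGSp4, transpose_mul_J4_mul_eq_smul_iff, isUnit_iff_ne_zero]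
  refine ⟨fun h => h.2, fun ⟨hm, h⟩ => ⟨IsUnit.of_mul_eq_one_right (m⁻¹ • sympAdjoint δ) ?_, hm, h⟩⟩
  rw [smul_mul_assoc, h, smul_smul, inv_mul_cancel₀ hm, one_smul]

theorem aeval_eq_aeval_iff_minpoly_dvd {A : Type*} [Ring A] [Algebra k A] {x : A} {p q : k[X]} :
    aeval x p = aeval x q ↔ minpoly k x ∣ p - q := by
  rw [← sub_eq_zero, ← map_sub, minpoly.dvd_iff]

variable {c : k} {γ : Matrix (Fin 4) (Fin 4) k}

theorem sympAdjoint_eq_aeval_sympAdjointPoly (hc : c ≠ 0)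
    (hmin : minpoly k γ = (X ^ 2 - C c) ^ 2) (hγ : InGSp4 c γ) :
    sympAdjoint γ = aeval γ (sympAdjointPoly c) := by
  refine hγ.1.mul_left_injective ?_
  change sympAdjoint γ * γ = aeval γ (sympAdjointPoly c) * γ
  have hcc : C c * C c⁻¹ = 1 := by rw [← C_mul, mul_inv_cancel₀ hc, C_1]
  have hσ : aeval γ (sympAdjointPoly c) * γ = aeval γ (sympAdjointPoly c * X) := by
    rw [map_mul, aeval_X]
  rw [(inGSp4_iff_sympAdjoint_mul_self.1 hγ).2, hσ, ← Algebra.algebraMap_eq_smul_one, ← aeval_C,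
    aeval_eq_aeval_iff_minpoly_dvd, hmin]
  exact ⟨C c⁻¹, by rw [sympAdjointPoly]; linear_combination (X ^ 2 - C c) * hcc⟩

theorem sympAdjoint_aeval_coordPoly_mul_self (hc : c ≠ 0)
    (hmin : minpoly k γ = (X ^ 2 - C c) ^ 2) (hγ : InGSp4 c γ) (v : (k × k) × (k × k)) :
    sympAdjoint (aeval γ (coordPoly c v)) * aeval γ (coordPoly c v) =
      aeval γ (coordPoly c ((v.1.1 ^ 2 + c * v.1.2 ^ 2, 2 * v.1.1 * v.1.2),
        (0, -(c⁻¹ * v.1.1 * v.1.2)))) := by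
  rw [sympAdjoint_aeval, sympAdjoint_eq_aeval_sympAdjointPoly hc hmin hγ, ← aeval_comp, ← map_mul,
    aeval_eq_aeval_iff_minpoly_dvd, hmin]
  exact dvd_coordPoly_comp_mul_sub hc v

theorem aeval_coordPoly_injective (hmin : minpoly k γ = (X ^ 2 - C c) ^ 2) :
    Function.Injective fun v => aeval γ (coordPoly c v) := by
  intro v w h
  rw [← sub_eq_zero]
  apply eq_zero_of_dvd_coordPoly
  rw [← coordPoly_sub, ← hmin, ← aeval_eq_aeval_iff_minpoly_dvd]
  exact h

theorem exists_inGSp4_aeval_coordPoly_iff (hc : c ≠ 0)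
    (hmin : minpoly k γ = (X ^ 2 - C c) ^ 2) (hγ : InGSp4 c γ) (v : (k × k) × (k × k)) :
    (∃ m, InGSp4 m (aeval γ (coordPoly c v))) ↔ v.1.1 * v.1.2 = 0 ∧ v.1 ≠ 0 := by
  have hm (m : k) :
      m • (1 : Matrix (Fin 4) (Fin 4) k) = aeval γ (coordPoly c ((m, 0), (0, 0))) := by
    simp [coordPoly, Algebra.algebraMap_eq_smul_one]
  simp_rw [inGSp4_iff_sympAdjoint_mul_self, sympAdjoint_aeval_coordPoly_mul_self hc hmin hγ, hm,
    (aeval_coordPoly_injective hmin).eq_iff]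
  obtain ⟨⟨x, y⟩, z, w⟩ := v
  simp only [Prod.mk.injEq, true_and]
  constructor
  · rintro ⟨m, hm, ⟨rfl, -⟩, hxy⟩
    have hxy : x * y = 0 := by simpa [hc, mul_assoc] using hxy
    refine ⟨hxy, fun h0 => hm ?_⟩
    simp only [Prod.ext_iff, Prod.fst_zero, Prod.snd_zero] at h0
    simp [h0]
  · rintro ⟨hxy, hne⟩
    refine ⟨x ^ 2 + c * y ^ 2, ?_, ⟨rfl, by simp [hxy, mul_assoc]⟩, by simp [hxy, mul_assoc]⟩
    rcases mul_eq_zero.1 hxy with rfl | rfl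
    · simpa [hc] using hne
    · simpa using hne

theorem Nat.card_mul_eq_zero_ne_zero (K : Type*) [Field K] [Finite K] :
    Nat.card {s : K × K // s.1 * s.2 = 0 ∧ s ≠ 0} = 2 * (Nat.card K - 1) := by
  let f : Kˣ ⊕ Kˣ → K × K := Sum.elim (fun u => ((u : K), 0)) (fun u => (0, (u : K)))
  have hf : Function.Injective f :=
    Function.Injective.sumElim (fun u v h => Units.ext (congrArg Prod.fst h))
      (fun u v h => Units.ext (congrArg Prod.snd h)) fun u v h => u.ne_zero (congrArg Prod.fst h)
  have hrange : Set.range f = {s : K × K | s.1 * s.2 = 0 ∧ s ≠ 0} := by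
    have hunit (x : K) : (∃ u : Kˣ, (u : K) = x) ↔ x ≠ 0 := isUnit_iff_ne_zero
    ext ⟨x, y⟩
    simp only [f, Set.Sum.elim_range, Set.mem_union, Set.mem_range, Prod.mk.injEq, exists_and_left,
      exists_and_right, hunit, eq_comm (a := (0 : K)), Set.mem_ofPred_eq, _root_.mul_eq_zero, ne_eq,
      Prod.mk_eq_zero, not_and]
    tauto
  rw [← Set.coe_ofPred, ← hrange, ← Nat.card_congr (Equiv.ofInjective f hf), Nat.card_sum,
    Nat.card_units]
  ring

theorem centOrder_eq_card_coords {c : k} (hc : c ≠ 0) {γ : Matrix (Fin 4) (Fin 4) k}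
    (hmin : minpoly k γ = (X ^ 2 - C c) ^ 2) (hγ : InGSp4 c γ)
    (hcent : ∀ δ, Commute δ γ → ∃ p : k[X], δ = aeval γ p) :
    centOrder γ = Nat.card {v : (k × k) × (k × k) // v.1.1 * v.1.2 = 0 ∧ v.1 ≠ 0} := by
  let Ψ : {v : (k × k) × (k × k) // v.1.1 * v.1.2 = 0 ∧ v.1 ≠ 0} →
      {δ : Matrix (Fin 4) (Fin 4) k // (∃ m, InGSp4 m δ) ∧ δ * γ = γ * δ} := fun v =>
    ⟨aeval γ (coordPoly c v), (exists_inGSp4_aeval_coordPoly_iff hc hmin hγ v).2 v.2,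
      by simpa using ((Commute.all (coordPoly c v) X).map (aeval γ)).eq⟩
  have hΨ : Function.Bijective Ψ := by
    refine ⟨fun v w h => Subtype.ext (aeval_coordPoly_injective hmin (congrArg Subtype.val h)), ?_⟩
    rintro ⟨δ, hδ, hcomm⟩
    obtain ⟨p, rfl⟩ := hcent δ hcomm
    obtain ⟨v, hv⟩ := exists_dvd_sub_coordPoly c p
    have hpv : aeval γ p = aeval γ (coordPoly c v) := by
      rwa [aeval_eq_aeval_iff_minpoly_dvd, hmin]
    rw [hpv] at hδ
    exact ⟨⟨v, (exists_inGSp4_aeval_coordPoly_iff hc hmin hγ v).1 hδ⟩, Subtype.ext hpv.symm⟩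
  exact (Nat.card_eq_of_bijective Ψ hΨ).symm

end Centralizer

theorem Nat.card_mul_eq_zero_and_ne_zero (K : Type*) [Field K] [Finite K] :
    Nat.card {s : K × K // s.1 * s.2 = 0 ∧ s ≠ 0} = 2 * (Nat.card K - 1) := by
  let f : Kˣ ⊕ Kˣ → K × K := Sum.elim (fun u => ((u : K), 0)) (fun u => (0, (u : K)))
  have hf : Function.Injective f := by
    rintro (u | u) (v | v) h <;> simp [f] at h ⊢ <;> exact Units.ext h
  have hrange : Set.range f = {s : K × K | s.1 * s.2 = 0 ∧ s ≠ 0} := by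
    have hunit (x : K) : (∃ u : Kˣ, (u : K) = x) ↔ x ≠ 0 := isUnit_iff_ne_zero
    ext ⟨x, y⟩
    simp [f, hunit, eq_comm (a := (0 : K))]
    tauto
  rw [← Set.coe_ofPred, ← hrange, ← Nat.card_congr (Equiv.ofInjective f hf), Nat.card_sum,
    Nat.card_units]
  ring

theorem centOrder_eq_of_minpoly_eq {k : Type*} [Field k] [Finite k] {a : k} (ha : a ≠ 0)
    (h2 : (2 : k) ≠ 0) {γ : Matrix (Fin 4) (Fin 4) k} (hγ : InGSp4 (a ^ 2) γ)
    (hmin : minpoly k γ = (X - C a) ^ 2 * (X + C a) ^ 2) :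
    centOrder γ = 2 * Nat.card k ^ 2 * (Nat.card k - 1) := by
  have hmin' : minpoly k γ = (X - C a) ^ 2 * (X - C (-a)) ^ 2 := by
    rw [hmin, map_neg, sub_neg_eq_add]
  have hneg : a ≠ -a := fun h =>
    h2 <| (mul_eq_zero.1 (by linear_combination h : (2 : k) * a = 0)).resolve_right ha
  rw [centOrder_eq_card_coords (pow_ne_zero 2 ha) (by rw [hmin, map_pow]; ring) hγ
      fun δ => exists_eq_aeval_of_commute_of_minpoly_eq hneg (Fintype.card_fin 4) hmin',
    Nat.card_congr
      (Equiv.prodSubtypeFstEquivSubtypeProd (p := fun s : k × k => s.1 * s.2 = 0 ∧ s ≠ 0)),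
    Nat.card_prod, Nat.card_mul_eq_zero_and_ne_zero, Nat.card_prod]
  ring

theorem stmt5_general (ℓ : ℕ) (hodd : ℓ ≠ 2) [Fact ℓ.Prime]
    (a : ZMod ℓ) (ha : a ≠ 0)
    (γ : Matrix (Fin 4) (Fin 4) (ZMod ℓ)) (hγ : InGSp4 (a ^ 2) γ)
    (hcyc : IsCyclicMat γ)
    (hchar : γ.charpoly = (X - C a) ^ 2 * (X + C a) ^ 2) :
    centOrder γ = 2 * ℓ ^ 2 * (ℓ - 1) := by
  have h2 : (2 : ZMod ℓ) ≠ 0 := Ring.two_ne_zero (by rwa [ZMod.ringChar_zmod_n])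
  rw [centOrder_eq_of_minpoly_eq ha h2 hγ (hcyc.trans hchar), Nat.card_zmod]

theorem stmt5 (ℓ : ℕ) (hℓ : ℓ.Prime) (hodd : ℓ ≠ 2) [Fact ℓ.Prime]
    (a : ZMod ℓ) (ha : a ≠ 0)
    (γ : Matrix (Fin 4) (Fin 4) (ZMod ℓ)) (hγ : InGSp4 (a ^ 2) γ)
    (hcyc : IsCyclicMat γ)
    (hchar : γ.charpoly = (X - C a) ^ 2 * (X + C a) ^ 2) :
    centOrder γ = 2 * ℓ ^ 2 * (ℓ - 1) :=
  stmt5_general ℓ hodd a ha γ hγ hcyc hchar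
end
end

section
/- Let ℓ be a prime, let a₁ ≠ a₂ be elements of F_ℓˣ, and let γ ∈ GSp₄(F_ℓ) be a cyclic element with characteristic polynomial (T−a₁)²(T−a₂)² and multiplier m(γ) = a₁a₂. Then the centralizer of γ in GSp₄(F_ℓ) has order ℓ(ℓ−1)². -/
open Matrix Polynomial

noncomputable section

/-!
Being cyclic with minimal polynomial `(X - a₁)² (X - a₂)²`, `γ` is conjugate to the Jordan
matrix with blocks `J₂(a₁)` and `J₂(a₂)`. Conjugation carries `J` to an alternating form `B` for
which this Jordan matrix is a similitude of multiplier `a₁ a₂`, and that pins down the shape of `B`.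
The matrices commuting with the Jordan matrix are the block diagonal ones with lower triangular
Toeplitz blocks `(x, y)` and `(z, w)`; such a matrix is a similitude of `B` exactly when
`x z ≠ 0` and `a₂ x w = a₁ y z`. So the centralizer is parametrised by `(x, y, z) ∈ 𝔽ˣ × 𝔽 × 𝔽ˣ`.
-/

section Similitude

variable {n R : Type*} [Fintype n] [DecidableEq n] [CommRing R]

def similitudeCentralizer (B γ : Matrix n n R) : Set (Matrix n n R) :=
  {δ | (∃ m : R, IsUnit δ ∧ IsUnit m ∧ δᵀ * B * δ = m • B) ∧ δ * γ = γ * δ}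

lemma centOrder_eq_card_similitudeCentralizer (γ : Matrix (Fin 4) (Fin 4) R) :
    centOrder γ = Nat.card (similitudeCentralizer (J4 R) γ) := rfl

lemma conj_similitude_iff (g : (Matrix n n R)ˣ) {B δ : Matrix n n R} {m : R} :
    (g⁻¹ * δ * g : Matrix n n R)ᵀ * ((g : Matrix n n R)ᵀ * B * (g : Matrix n n R)) *
        (g⁻¹ * δ * g : Matrix n n R) = m • ((g : Matrix n n R)ᵀ * B * (g : Matrix n n R)) ↔
      δᵀ * B * δ = m • B := by
  have hinv : ∀ X : Matrix n n R, (↑g⁻¹ : Matrix n n R)ᵀ * ((g : Matrix n n R)ᵀ * X) = X := by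
    intro X
    rw [← mul_assoc, ← transpose_mul, Units.mul_inv, transpose_one, one_mul]
  rw [show (g⁻¹ * δ * g : Matrix n n R)ᵀ * ((g : Matrix n n R)ᵀ * B * (g : Matrix n n R)) *
        (g⁻¹ * δ * g : Matrix n n R) = (g : Matrix n n R)ᵀ * (δᵀ * B * δ) * g by
      simp only [transpose_mul, mul_assoc, hinv, Units.mul_inv_cancel_left],
    show m • ((g : Matrix n n R)ᵀ * B * (g : Matrix n n R)) = (g : Matrix n n R)ᵀ * (m • B) * g by
      rw [Matrix.mul_smul, Matrix.smul_mul],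
    g.isUnit.mul_left_inj, ((isUnit_transpose _).2 g.isUnit).mul_right_inj]

lemma conj_mem_similitudeCentralizer_iff (g : (Matrix n n R)ˣ) {B γ δ : Matrix n n R} :
    (g⁻¹ * δ * g : Matrix n n R) ∈ similitudeCentralizer
        ((g : Matrix n n R)ᵀ * B * (g : Matrix n n R)) (g⁻¹ * γ * g : Matrix n n R) ↔
      δ ∈ similitudeCentralizer B γ := by
  have hcomm : (g⁻¹ * δ * g * (g⁻¹ * γ * g) : Matrix n n R) = g⁻¹ * γ * g * (g⁻¹ * δ * g) ↔
      δ * γ = γ * δ := by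
    simp only [mul_assoc, Units.mul_inv_cancel_left, Units.mul_right_inj]
    simp only [← mul_assoc, Units.mul_left_inj]
  simp only [similitudeCentralizer, Set.mem_ofPred_eq, Units.isUnit_mul_units,
    Units.isUnit_units_mul, conj_similitude_iff, hcomm]

lemma card_similitudeCentralizer_conj (g : (Matrix n n R)ˣ) (B γ : Matrix n n R) :
    Nat.card (similitudeCentralizer ((g : Matrix n n R)ᵀ * B * (g : Matrix n n R))
        (g⁻¹ * γ * g : Matrix n n R)) = Nat.card (similitudeCentralizer B γ) :=
  Nat.card_congr (((Units.mulLeft g⁻¹).trans (Units.mulRight g)).subtypeEquiv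
    fun _ => (conj_mem_similitudeCentralizer_iff g).symm).symm

lemma transpose_J4 : (J4 R)ᵀ = -J4 R := by
  ext i j
  fin_cases i <;> fin_cases j <;> simp [J4]

lemma transpose_mul_J4_mul (P : Matrix (Fin 4) (Fin 4) R) :
    (Pᵀ * J4 R * P)ᵀ = -(Pᵀ * J4 R * P) := by
  simp [transpose_mul, transpose_J4, mul_assoc]

lemma det_transpose_mul_J4_mul (P : Matrix (Fin 4) (Fin 4) R) :
    (Pᵀ * J4 R * P).det = P.det ^ 2 := by
  have hJ : (J4 R).det = 1 := by
    simp [J4, det_succ_row_zero, Fin.sum_univ_succ, Fin.succAbove]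
  rw [det_mul, det_mul, det_transpose, hJ]
  ring

end Similitude

section JordanBasis

variable {n k : Type*} [Fintype n] [Field k]

lemma exists_mulVec_of_minpoly_eq_sq_mul [DecidableEq n] (γ : Matrix n n k) {a : k} {p : k[X]}
    (h : minpoly k γ = (X - C a) ^ 2 * p) :
    ∃ v : n → k, aeval γ (X - C a) *ᵥ (aeval γ (X - C a) *ᵥ v) = 0 ∧
      aeval γ (X - C a) *ᵥ v ≠ 0 := by
  by_contra! H
  have hp : p ≠ 0 := by
    rintro rfl
    exact minpoly.ne_zero (Matrix.isIntegral γ) (by simpa using h)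
  have hann : aeval γ ((X - C a) * p) = 0 := by
    refine Matrix.ext_of_mulVec_single fun i => ?_
    rw [zero_mulVec, map_mul, ← mulVec_mulVec]
    refine H _ ?_
    simp only [mulVec_mulVec, ← map_mul]
    rw [show (X - C a) * ((X - C a) * p) = minpoly k γ by rw [h]; ring, minpoly.aeval, zero_mulVec]
  have hdvd : (X - C a) * ((X - C a) * p) ∣ 1 * ((X - C a) * p) := by
    rw [one_mul, ← mul_assoc, ← sq, ← h]
    exact minpoly.dvd k γ hann
  rw [mul_dvd_mul_iff_right (mul_ne_zero (X_sub_C_ne_zero a) hp)] at hdvd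
  exact not_isUnit_X_sub_C a (isUnit_of_dvd_one hdvd)

lemma eq_zero_of_mulVec_eq_zero_of_isCoprime [DecidableEq n] (γ : Matrix n n k) {p q : k[X]}
    (hpq : IsCoprime p q) {w : n → k} (hp : aeval γ p *ᵥ w = 0) (hq : aeval γ q *ᵥ w = 0) :
    w = 0 := by
  obtain ⟨s, t, hst⟩ := hpq
  have := congrArg (fun r => aeval γ r *ᵥ w) hst
  simpa [add_mulVec, ← mulVec_mulVec, hp, hq] using this.symm

lemma smul_add_smul_mulVec_eq_zero {N : Matrix n n k} {v : n → k}
    (hv : N *ᵥ (N *ᵥ v) = 0) (hNv : N *ᵥ v ≠ 0) {c d : k} (h : c • v + d • N *ᵥ v = 0) :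
    c = 0 ∧ d = 0 := by
  have hc : c • N *ᵥ v = 0 := by
    simpa [mulVec_add, mulVec_smul, hv] using congrArg (N *ᵥ ·) h
  obtain rfl : c = 0 := (smul_eq_zero.1 hc).resolve_right hNv
  simpa [hNv] using h

lemma linearIndependent_jordanChains {N₁ N₂ : Matrix n n k}
    (hdisj : ∀ w, N₁ *ᵥ (N₁ *ᵥ w) = 0 → N₂ *ᵥ (N₂ *ᵥ w) = 0 → w = 0) {v₁ v₂ : n → k}
    (hv₁ : N₁ *ᵥ (N₁ *ᵥ v₁) = 0) (hNv₁ : N₁ *ᵥ v₁ ≠ 0)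
    (hv₂ : N₂ *ᵥ (N₂ *ᵥ v₂) = 0) (hNv₂ : N₂ *ᵥ v₂ ≠ 0) :
    LinearIndependent k ![v₁, N₁ *ᵥ v₁, v₂, N₂ *ᵥ v₂] := by
  rw [Fintype.linearIndependent_iff]
  intro c hc
  simp only [Fin.sum_univ_four, Matrix.cons_val] at hc
  set w₁ := c 0 • v₁ + c 1 • N₁ *ᵥ v₁
  set w₂ := c 2 • v₂ + c 3 • N₂ *ᵥ v₂
  have hw₁ : N₁ *ᵥ (N₁ *ᵥ w₁) = 0 := by simp [w₁, mulVec_add, mulVec_smul, hv₁]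
  have hw₂ : N₂ *ᵥ (N₂ *ᵥ w₂) = 0 := by simp [w₂, mulVec_add, mulVec_smul, hv₂]
  have hw : w₂ = -w₁ := eq_neg_of_add_eq_zero_right (by simpa only [w₂, add_assoc] using hc)
  have hw₁₀ : w₁ = 0 := hdisj w₁ hw₁ (by simpa [hw, mulVec_neg] using hw₂)
  obtain ⟨h0, h1⟩ := smul_add_smul_mulVec_eq_zero hv₁ hNv₁ hw₁₀
  obtain ⟨h2, h3⟩ := smul_add_smul_mulVec_eq_zero (c := c 2) (d := c 3) hv₂ hNv₂
    (show w₂ = 0 by rw [hw, hw₁₀, neg_zero])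
  intro i
  fin_cases i <;> assumption

end JordanBasis

section Jordan

variable {k : Type*} [Field k]

/-- The matrix of `γ` in the basis `v₁, (γ - a) v₁, v₂, (γ - b) v₂`. -/
def jordanMat (a b : k) : Matrix (Fin 4) (Fin 4) k :=
  !![a, 0, 0, 0; 1, a, 0, 0; 0, 0, b, 0; 0, 0, 1, b]

lemma exists_units_conj_eq_jordanMat {a b : k} (hab : a ≠ b) (γ : Matrix (Fin 4) (Fin 4) k)
    (h : minpoly k γ = (X - C a) ^ 2 * (X - C b) ^ 2) :
    ∃ g : (Matrix (Fin 4) (Fin 4) k)ˣ, g⁻¹ * γ * g = jordanMat a b := by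
  set N₁ := aeval γ (X - C a)
  set N₂ := aeval γ (X - C b)
  obtain ⟨v₁, hv₁, hNv₁⟩ := exists_mulVec_of_minpoly_eq_sq_mul γ h
  obtain ⟨v₂, hv₂, hNv₂⟩ := exists_mulVec_of_minpoly_eq_sq_mul γ (h.trans (mul_comm _ _))
  have hcop : IsCoprime ((X - C a) ^ 2) ((X - C b) ^ 2) :=
    (pairwise_coprime_X_sub_C Function.injective_id hab).pow
  have hdisj : ∀ w, N₁ *ᵥ (N₁ *ᵥ w) = 0 → N₂ *ᵥ (N₂ *ᵥ w) = 0 → w = 0 := fun w h₁ h₂ =>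
    eq_zero_of_mulVec_eq_zero_of_isCoprime γ hcop
      (by simpa only [sq, map_mul, ← mulVec_mulVec] using h₁)
      (by simpa only [sq, map_mul, ← mulVec_mulVec] using h₂)
  set g : Matrix (Fin 4) (Fin 4) k := (Matrix.of ![v₁, N₁ *ᵥ v₁, v₂, N₂ *ᵥ v₂])ᵀ
  have hg : IsUnit g := linearIndependent_cols_iff_isUnit.1
    (linearIndependent_jordanChains hdisj hv₁ hNv₁ hv₂ hNv₂)
  have hN₁ : ∀ v, N₁ *ᵥ v = γ *ᵥ v - a • v := fun v => by
    simp [N₁, sub_mulVec, Algebra.algebraMap_eq_smul_one, smul_mulVec]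
  have hN₂ : ∀ v, N₂ *ᵥ v = γ *ᵥ v - b • v := fun v => by
    simp [N₂, sub_mulVec, Algebra.algebraMap_eq_smul_one, smul_mulVec]
  have e₁ : γ *ᵥ v₁ = a • v₁ + N₁ *ᵥ v₁ := by rw [hN₁]; abel
  have e₂ : γ *ᵥ (N₁ *ᵥ v₁) = a • N₁ *ᵥ v₁ := by rw [← sub_eq_zero, ← hN₁, hv₁]
  have e₃ : γ *ᵥ v₂ = b • v₂ + N₂ *ᵥ v₂ := by rw [hN₂]; abel
  have e₄ : γ *ᵥ (N₂ *ᵥ v₂) = b • N₂ *ᵥ v₂ := by rw [← sub_eq_zero, ← hN₂, hv₂]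
  have hγg : γ * g = g * jordanMat a b := by
    ext i j
    rw [show (γ * g) i j = (γ *ᵥ ![v₁, N₁ *ᵥ v₁, v₂, N₂ *ᵥ v₂] j) i from rfl]
    fin_cases j <;> simp [e₁, e₂, e₃, e₄, mul_apply, Fin.sum_univ_four, jordanMat, g] <;> ring
  refine ⟨hg.unit, ?_⟩
  rw [mul_assoc, IsUnit.unit_spec, hγg, ← mul_assoc, IsUnit.val_inv_mul, one_mul]

def blockToeplitz (x y z w : k) : Matrix (Fin 4) (Fin 4) k :=
  !![x, 0, 0, 0; y, x, 0, 0; 0, 0, z, 0; 0, 0, w, z]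

def jordanSimilitudeForm (c q r : k) : Matrix (Fin 4) (Fin 4) k :=
  !![0, 0, c, q; 0, 0, r, 0; -c, -r, 0, 0; -q, 0, 0, 0]

lemma blockToeplitz_commute_jordanMat (a b x y z w : k) :
    blockToeplitz x y z w * jordanMat a b = jordanMat a b * blockToeplitz x y z w := by
  ext i j
  fin_cases i <;> fin_cases j <;>
    simp [blockToeplitz, jordanMat, mul_apply, Fin.sum_univ_four] <;> ring

lemma eq_blockToeplitz_of_commute_jordanMat {a b : k} (hab : a ≠ b) {δ : Matrix (Fin 4) (Fin 4) k}
    (h : δ * jordanMat a b = jordanMat a b * δ) :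
    δ = blockToeplitz (δ 0 0) (δ 1 0) (δ 2 2) (δ 3 2) := by
  have e := congrFun₂ h
  have e00 := e 0 0; have e02 := e 0 2; have e03 := e 0 3
  have e10 := e 1 0; have e12 := e 1 2; have e13 := e 1 3
  have e20 := e 2 0; have e21 := e 2 1; have e22 := e 2 2
  have e30 := e 3 0; have e31 := e 3 1; have e32 := e 3 2
  simp only [jordanMat, mul_apply, Fin.sum_univ_four, of_apply, cons_val', cons_val_zero,
    cons_val_one, cons_val, cons_val_fin_one] at e00 e02 e03 e10 e12 e13 e20 e21 e22 e30 e31 e32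
  have cancel : ∀ x : k, x * (a - b) = 0 → x = 0 := fun x hx =>
    (mul_eq_zero.1 hx).resolve_right (sub_ne_zero.2 hab)
  have h01 : δ 0 1 = 0 := by linear_combination e00
  have h03 : δ 0 3 = 0 := cancel _ (by linear_combination -e03)
  have h02 : δ 0 2 = 0 := cancel _ (by linear_combination -e02 + h03)
  have h11 : δ 1 1 = δ 0 0 := by linear_combination e10
  have h13 : δ 1 3 = 0 := cancel _ (by linear_combination -e13 - h03)
  have h12 : δ 1 2 = 0 := cancel _ (by linear_combination -e12 + h13 - h02)
  have h21 : δ 2 1 = 0 := cancel _ (by linear_combination e21)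
  have h20 : δ 2 0 = 0 := cancel _ (by linear_combination e20 - h21)
  have h23 : δ 2 3 = 0 := by linear_combination e22
  have h31 : δ 3 1 = 0 := cancel _ (by linear_combination e31 + h21)
  have h30 : δ 3 0 = 0 := cancel _ (by linear_combination e30 - h31 + h20)
  have h33 : δ 3 3 = δ 2 2 := by linear_combination e32
  ext i j
  fin_cases i <;> fin_cases j <;>
    simp [blockToeplitz, h01, h02, h03, h11, h12, h13, h20, h21, h23, h30, h31, h33]

lemma det_jordanSimilitudeForm (c q r : k) : (jordanSimilitudeForm c q r).det = (q * r) ^ 2 := by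
  simp [jordanSimilitudeForm, det_succ_row_zero, Fin.sum_univ_succ, Fin.succAbove]
  ring

lemma eq_jordanSimilitudeForm_of_jordanMat_similitude {a b : k} (ha : a ≠ 0) (hb : b ≠ 0)
    (hab : a ≠ b) {B : Matrix (Fin 4) (Fin 4) k} (hskew : Bᵀ = -B) (hdet : B.det ≠ 0)
    (hB : (jordanMat a b)ᵀ * B * jordanMat a b = (a * b) • B) :
    ∃ c q r, B = jordanSimilitudeForm c q r ∧ a * q + b * r = 0 ∧ q ≠ 0 := by
  have hsk : ∀ i j, B j i = -B i j := fun i j => by simpa using congrFun (congrFun hskew i) j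
  have e := congrFun₂ hB
  have e00 := e 0 0; have e01 := e 0 1; have e02 := e 0 2; have e11 := e 1 1
  have e12 := e 1 2; have e22 := e 2 2; have e23 := e 2 3; have e33 := e 3 3
  simp only [jordanMat, mul_apply, transpose_apply, Matrix.smul_apply, smul_eq_mul,
    Fin.sum_univ_four, of_apply, cons_val', cons_val_zero, cons_val_one, cons_val,
    cons_val_fin_one] at e00 e01 e02 e11 e12 e22 e23 e33
  have cancel : ∀ {c : k} (x : k), c ≠ 0 → x * c = 0 → x = 0 := fun x hc hx =>
    (mul_eq_zero.1 hx).resolve_right hc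
  have hab' : a * (a - b) ≠ 0 := mul_ne_zero ha (sub_ne_zero.2 hab)
  have hba' : b * (b - a) ≠ 0 := mul_ne_zero hb (sub_ne_zero.2 hab.symm)
  have h11 : B 1 1 = 0 := cancel _ hab' (by linear_combination e11)
  have h33 : B 3 3 = 0 := cancel _ hba' (by linear_combination e33)
  have h01 : B 0 1 = 0 := cancel _ hab' (by linear_combination e01 - a * h11)
  have h23 : B 2 3 = 0 := cancel _ hba' (by linear_combination e23 - b * h33)
  have h13 : B 1 3 = 0 := cancel _ ha (by linear_combination e12)
  have h00 : B 0 0 = 0 := cancel _ hab' (by linear_combination e00 - h11 - a * hsk 0 1)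
  have h22 : B 2 2 = 0 := cancel _ hba' (by linear_combination e22 - h33 - b * hsk 2 3)
  have hshape : B = jordanSimilitudeForm (B 0 2) (B 0 3) (B 1 2) := by
    ext i j
    fin_cases i <;> fin_cases j <;>
      simp [jordanSimilitudeForm, h00, h01, h11, h13, h22, h23, h33, hsk 0 1, hsk 1 3, hsk 2 3,
        hsk 0 2, hsk 1 2, hsk 0 3]
  refine ⟨_, _, _, hshape, by linear_combination e02 - h13, fun hq => hdet ?_⟩
  rw [hshape, det_jordanSimilitudeForm, hq, zero_mul, sq, zero_mul]

lemma isUnit_blockToeplitz_iff {x y z w : k} : IsUnit (blockToeplitz x y z w) ↔ x ≠ 0 ∧ z ≠ 0 := by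
  have hdet : (blockToeplitz x y z w).det = (x * z) ^ 2 := by
    simp [blockToeplitz, det_succ_row_zero, Fin.sum_univ_succ, Fin.succAbove]
    ring
  rw [isUnit_iff_isUnit_det, hdet, isUnit_iff_ne_zero, pow_ne_zero_iff two_ne_zero, mul_ne_zero_iff]

lemma blockToeplitz_similitude_iff {a b c q r : k} (hb : b ≠ 0) (hq : q ≠ 0)
    (hrel : a * q + b * r = 0) {x y z w m : k} :
    (blockToeplitz x y z w)ᵀ * jordanSimilitudeForm c q r * blockToeplitz x y z w =
        m • jordanSimilitudeForm c q r ↔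
      m = x * z ∧ b * x * w = a * y * z := by
  constructor
  · intro h
    have e02 := congrFun₂ h 0 2
    have e03 := congrFun₂ h 0 3
    simp only [blockToeplitz, jordanSimilitudeForm, mul_apply, transpose_apply, Matrix.smul_apply,
      smul_eq_mul, Fin.sum_univ_four, of_apply, cons_val', cons_val_zero, cons_val_one, cons_val,
      cons_val_fin_one] at e02 e03
    have hm : m = x * z := by
      have : (m - x * z) * q = 0 := by linear_combination -e03
      exact (sub_eq_zero.1 ((mul_eq_zero.1 this).resolve_right hq))
    refine ⟨hm, ?_⟩
    have : (b * x * w - a * y * z) * q = 0 := by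
      linear_combination b * e02 + b * c * hm - y * z * hrel
    exact sub_eq_zero.1 ((mul_eq_zero.1 this).resolve_right hq)
  · rintro ⟨rfl, hw⟩
    have hrel' : r * (y * z) + q * (x * w) = 0 := by
      have : (r * (y * z) + q * (x * w)) * b = 0 := by linear_combination y * z * hrel + q * hw
      exact (mul_eq_zero.1 this).resolve_right hb
    ext i j
    fin_cases i <;> fin_cases j <;>
      simp [blockToeplitz, jordanSimilitudeForm, mul_apply, Fin.sum_univ_four] <;>
      first | ring1 | linear_combination hrel' | linear_combination -hrel'

def jordanCentralizerParam (a b : k) (p : kˣ × k × kˣ) : Matrix (Fin 4) (Fin 4) k :=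
  blockToeplitz p.1 p.2.1 p.2.2 (a * p.2.1 * p.2.2 / (b * p.1))

lemma jordanCentralizerParam_injective (a b : k) :
    Function.Injective (jordanCentralizerParam a b) := by
  rintro ⟨x, y, z⟩ ⟨x', y', z'⟩ h
  have hx := congrFun₂ h 0 0
  have hy := congrFun₂ h 1 0
  have hz := congrFun₂ h 2 2
  simp only [jordanCentralizerParam, blockToeplitz, of_apply, cons_val', cons_val_zero,
    cons_val_one, cons_val_two, empty_val', cons_val_fin_one] at hx hy hz
  exact Prod.ext (Units.ext hx) (Prod.ext hy (Units.ext hz))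

lemma similitudeCentralizer_jordanMat {a b : k} (ha : a ≠ 0) (hb : b ≠ 0) (hab : a ≠ b)
    {B : Matrix (Fin 4) (Fin 4) k} (hskew : Bᵀ = -B) (hdet : B.det ≠ 0)
    (hB : (jordanMat a b)ᵀ * B * jordanMat a b = (a * b) • B) :
    similitudeCentralizer B (jordanMat a b) = Set.range (jordanCentralizerParam a b) := by
  obtain ⟨c, q, r, rfl, hrel, hq⟩ :=
    eq_jordanSimilitudeForm_of_jordanMat_similitude ha hb hab hskew hdet hB
  ext δ
  constructor
  · rintro ⟨⟨m, hδ, -, hsim⟩, hcomm⟩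
    rw [eq_blockToeplitz_of_commute_jordanMat hab hcomm] at hδ hsim ⊢
    rw [isUnit_blockToeplitz_iff] at hδ
    rw [blockToeplitz_similitude_iff hb hq hrel] at hsim
    refine ⟨(Units.mk0 _ hδ.1, δ 1 0, Units.mk0 _ hδ.2), ?_⟩
    simp only [jordanCentralizerParam, Units.val_mk0]
    congr 1
    rw [div_eq_iff (mul_ne_zero hb hδ.1)]
    linear_combination -hsim.2
  · rintro ⟨⟨x, y, z⟩, rfl⟩
    refine ⟨⟨x * z, isUnit_blockToeplitz_iff.2 ⟨x.ne_zero, z.ne_zero⟩, (x * z).isUnit, ?_⟩,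
      blockToeplitz_commute_jordanMat _ _ _ _ _ _⟩
    rw [jordanCentralizerParam, blockToeplitz_similitude_iff hb hq hrel]
    refine ⟨by push_cast; rfl, ?_⟩
    field_simp

end Jordan

theorem stmt6_general (ℓ : ℕ) [Fact ℓ.Prime]
    (a₁ a₂ : ZMod ℓ) (ha₁ : a₁ ≠ 0) (ha₂ : a₂ ≠ 0) (hne : a₁ ≠ a₂)
    (γ : Matrix (Fin 4) (Fin 4) (ZMod ℓ)) (hγ : InGSp4 (a₁ * a₂) γ)
    (hcyc : IsCyclicMat γ)
    (hchar : γ.charpoly = (X - C a₁) ^ 2 * (X - C a₂) ^ 2) :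
    centOrder γ = ℓ * (ℓ - 1) ^ 2 := by
  obtain ⟨g, hg⟩ := exists_units_conj_eq_jordanMat hne γ (hcyc.trans hchar)
  set B := (g : Matrix (Fin 4) (Fin 4) (ZMod ℓ))ᵀ * J4 (ZMod ℓ) * g
  have hdet : B.det ≠ 0 := by
    rw [det_transpose_mul_J4_mul]
    exact pow_ne_zero 2 ((isUnit_iff_isUnit_det _).1 g.isUnit).ne_zero
  have hB : (jordanMat a₁ a₂)ᵀ * B * jordanMat a₁ a₂ = (a₁ * a₂) • B := by
    rw [← hg, conj_similitude_iff]
    exact hγ.2.2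
  rw [centOrder_eq_card_similitudeCentralizer, ← card_similitudeCentralizer_conj g, hg,
    similitudeCentralizer_jordanMat ha₁ ha₂ hne (transpose_mul_J4_mul _) hdet hB,
    Nat.card_range_of_injective (jordanCentralizerParam_injective _ _), Nat.card_prod,
    Nat.card_prod, Nat.card_zmod, Nat.card_eq_fintype_card, ZMod.card_units]
  ring

theorem stmt6 (ℓ : ℕ) (hℓ : ℓ.Prime) [Fact ℓ.Prime]
    (a₁ a₂ : ZMod ℓ) (ha₁ : a₁ ≠ 0) (ha₂ : a₂ ≠ 0) (hne : a₁ ≠ a₂)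
    (γ : Matrix (Fin 4) (Fin 4) (ZMod ℓ)) (hγ : InGSp4 (a₁ * a₂) γ)
    (hcyc : IsCyclicMat γ)
    (hchar : γ.charpoly = (X - C a₁) ^ 2 * (X - C a₂) ^ 2) :
    centOrder γ = ℓ * (ℓ - 1) ^ 2 :=
  stmt6_general ℓ a₁ a₂ ha₁ ha₂ hne γ hγ hcyc hchar
end
end

section
/- Let ℓ be an odd prime, let a ∈ F_ℓˣ, and let x ∈ F_ℓˣ be a nonsquare. Define the 4×4 matrices over F_ℓ: γ₁ with rows (a,0,1,0), (0,−a,0,1), (0,0,a,0), (0,0,0,−a), and γ₂ with rows (a,0,1,0), (0,−a,0,x), (0,0,a,0), (0,0,0,−a). Then γ₁ and γ₂ both lie in GSp₄(F_ℓ) with multiplier a², they are conjugate in GL₄(F_ℓ), but they are not conjugate in GSp₄(F_ℓ). -/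
/-! An element `g` intertwining the two matrices preserves the generalized eigenspaces
`⟨e₀, e₂⟩` and `⟨e₁, e₃⟩`, which are orthogonal hyperbolic planes for `J`. On the first plane `g`
is `g₀₀` times a unipotent, so the multiplier is `g₀₀²`; on the second, intertwining the nilpotent
parts `e₃ ↦ e₁` and `e₃ ↦ x e₁` forces `g₁₁ = x g₃₃`, so the multiplier is `x g₃₃²`. Hence `x` is a
square. Over `GL₄` the diagonal matrix `diag(1, x, 1, 1)` conjugates one into the other. -/

open Matrix Polynomial

noncomputable section

section CommRing

variable {R : Type*} [CommRing R]

def jordanPair (a u : R) : Matrix (Fin 4) (Fin 4) R :=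
  !![a, 0, 1, 0; 0, -a, 0, u; 0, 0, a, 0; 0, 0, 0, -a]

lemma transpose_mul_J4_mul_apply (g : Matrix (Fin 4) (Fin 4) R) (i j : Fin 4) :
    (gᵀ * J4 R * g) i j = g 0 i * g 2 j + g 1 i * g 3 j - g 2 i * g 0 j - g 3 i * g 1 j := by
  simp [J4, Matrix.mul_apply, Fin.sum_univ_four]
  ring

lemma diagonal_mul_jordanPair (a u c : R) :
    diagonal ![1, c, 1, 1] * jordanPair a u = jordanPair a (c * u) * diagonal ![1, c, 1, 1] := by
  ext i j
  fin_cases i <;> fin_cases j <;> simp [jordanPair, mul_comm]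

end CommRing

section Field

variable {k : Type*} [Field k]

lemma inGSp4_jordanPair {a : k} (ha : a ≠ 0) (u : k) : InGSp4 (a ^ 2) (jordanPair a u) := by
  refine ⟨?_, (pow_ne_zero 2 ha).isUnit, ?_⟩
  · have hdet : (jordanPair a u).det = a ^ 4 := by
      simp [jordanPair, Matrix.det_succ_row_zero, Fin.sum_univ_succ]
      ring
    rw [Matrix.isUnit_iff_isUnit_det, hdet]
    exact (pow_ne_zero 4 ha).isUnit
  · ext i j
    rw [transpose_mul_J4_mul_apply]
    fin_cases i <;> fin_cases j <;> simp [jordanPair, J4] <;> ring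

lemma exists_conj_jordanPair (a u : k) {c : k} (hc : c ≠ 0) :
    ∃ g : Matrix (Fin 4) (Fin 4) k, IsUnit g ∧
      g * jordanPair a u * g⁻¹ = jordanPair a (c * u) := by
  have hdet : IsUnit (diagonal ![1, c, 1, 1]).det := by
    simpa [Fin.prod_univ_four] using hc.isUnit
  refine ⟨_, (Matrix.isUnit_iff_isUnit_det _).2 hdet, ?_⟩
  rw [diagonal_mul_jordanPair, mul_assoc, Matrix.mul_nonsing_inv _ hdet, mul_one]

lemma multiplier_eq_of_mul_jordanPair_eq {a u v m : k} (h2a : 2 * a ≠ 0)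
    {g : Matrix (Fin 4) (Fin 4) k} (hg : g * jordanPair a u = jordanPair a v * g)
    (hsymp : gᵀ * J4 k * g = m • J4 k) :
    m = g 0 0 ^ 2 ∧ u * m = v * g 3 3 ^ 2 := by
  have hentry : ∀ i j, (g * jordanPair a u) i j = (jordanPair a v * g) i j := fun i j ↦ by rw [hg]
  have hform : ∀ i j, (gᵀ * J4 k * g) i j = (m • J4 k) i j := fun i j ↦ by rw [hsymp]
  have e21 := hentry 2 1; have e22 := hentry 2 2; have e30 := hentry 3 0; have e01 := hentry 0 1
  have e10 := hentry 1 0; have e02 := hentry 0 2; have e33 := hentry 3 3; have e13 := hentry 1 3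
  simp only [jordanPair, Matrix.mul_apply, of_apply, cons_val', cons_val_one, cons_val_zero,
    cons_val_fin_one, Fin.sum_univ_four, mul_zero, mul_neg, zero_add, cons_val, add_zero, zero_mul,
    mul_one, neg_mul, one_mul] at e21 e22 e30 e01 e10 e02 e33 e13
  have s02 := hform 0 2; have s13 := hform 1 3
  rw [transpose_mul_J4_mul_apply] at s02 s13
  simp only [J4, Matrix.smul_apply, of_apply, cons_val', cons_val, cons_val_fin_one, cons_val_zero,
    smul_eq_mul, mul_one, cons_val_one] at s02 s13
  have hg21 : g 2 1 = 0 :=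
    (mul_eq_zero.1 (by linear_combination -e21 : 2 * a * g 2 1 = 0)).resolve_left h2a
  have hg30 : g 3 0 = 0 :=
    (mul_eq_zero.1 (by linear_combination e30 : 2 * a * g 3 0 = 0)).resolve_left h2a
  have hg01 : g 0 1 = 0 :=
    (mul_eq_zero.1 (by linear_combination -e01 - hg21 : 2 * a * g 0 1 = 0)).resolve_left h2a
  have hg10 : g 1 0 = 0 :=
    (mul_eq_zero.1 (by linear_combination e10 + v * hg30 : 2 * a * g 1 0 = 0)).resolve_left h2a
  constructor
  · linear_combination -s02 + g 3 2 * hg10 - g 0 2 * e22 - g 1 2 * hg30 - g 0 0 * e02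
  · linear_combination -u * s13 + u * g 2 3 * hg01 - u * g 0 3 * hg21 - g 1 3 * e33 + g 3 3 * e13

lemma isSquare_mul_of_conj_jordanPair {a u v m : k} (h2a : 2 * a ≠ 0)
    {g : Matrix (Fin 4) (Fin 4) k} (hg : InGSp4 m g)
    (hconj : g * jordanPair a u * g⁻¹ = jordanPair a v) :
    IsSquare (u * v) := by
  obtain ⟨hgU, hmU, hsymp⟩ := hg
  have hcomm : g * jordanPair a u = jordanPair a v * g := by
    rw [← hconj, Matrix.nonsing_inv_mul_cancel_right _ _ ((Matrix.isUnit_iff_isUnit_det g).1 hgU)]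
  obtain ⟨hm, huv⟩ := multiplier_eq_of_mul_jordanPair_eq h2a hcomm hsymp
  have hg00 : g 0 0 ≠ 0 := fun h ↦ hmU.ne_zero (by rw [hm, h]; ring)
  refine ⟨v * g 3 3 / g 0 0, ?_⟩
  field_simp
  linear_combination v * huv - u * v * hm

end Field

theorem stmt9_general (ℓ : ℕ) (hodd : ℓ ≠ 2) [Fact ℓ.Prime]
    (a : ZMod ℓ) (ha : a ≠ 0)
    (x : ZMod ℓ) (hx : x ≠ 0) (hns : ¬ IsSquare x)
    (γ₁ γ₂ : Matrix (Fin 4) (Fin 4) (ZMod ℓ))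
    (hγ₁ : γ₁ = !![a, 0, 1, 0; 0, -a, 0, 1; 0, 0, a, 0; 0, 0, 0, -a])
    (hγ₂ : γ₂ = !![a, 0, 1, 0; 0, -a, 0, x; 0, 0, a, 0; 0, 0, 0, -a]) :
    InGSp4 (a ^ 2) γ₁ ∧ InGSp4 (a ^ 2) γ₂ ∧
      (∃ g : Matrix (Fin 4) (Fin 4) (ZMod ℓ), IsUnit g ∧ g * γ₁ * g⁻¹ = γ₂) ∧
      ¬ (∃ g : Matrix (Fin 4) (Fin 4) (ZMod ℓ), (∃ m, InGSp4 m g) ∧ g * γ₁ * g⁻¹ = γ₂) := by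
  obtain rfl : γ₁ = jordanPair a 1 := hγ₁
  obtain rfl : γ₂ = jordanPair a x := hγ₂
  have h2a : (2 : ZMod ℓ) * a ≠ 0 :=
    mul_ne_zero (Ring.two_ne_zero (by rwa [ZMod.ringChar_zmod_n])) ha
  refine ⟨inGSp4_jordanPair ha 1, inGSp4_jordanPair ha x, ?_, ?_⟩
  · simpa only [mul_one] using exists_conj_jordanPair a 1 hx
  · rintro ⟨g, ⟨m, hg⟩, hconj⟩
    exact hns (by simpa only [one_mul] using isSquare_mul_of_conj_jordanPair h2a hg hconj)

theorem stmt9 (ℓ : ℕ) (hℓ : ℓ.Prime) (hodd : ℓ ≠ 2) [Fact ℓ.Prime]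
    (a : ZMod ℓ) (ha : a ≠ 0)
    (x : ZMod ℓ) (hx : x ≠ 0) (hns : ¬ IsSquare x)
    (γ₁ γ₂ : Matrix (Fin 4) (Fin 4) (ZMod ℓ))
    (hγ₁ : γ₁ = !![a, 0, 1, 0; 0, -a, 0, 1; 0, 0, a, 0; 0, 0, 0, -a])
    (hγ₂ : γ₂ = !![a, 0, 1, 0; 0, -a, 0, x; 0, 0, a, 0; 0, 0, 0, -a]) :
    InGSp4 (a ^ 2) γ₁ ∧ InGSp4 (a ^ 2) γ₂ ∧
      (∃ g : Matrix (Fin 4) (Fin 4) (ZMod ℓ), IsUnit g ∧ g * γ₁ * g⁻¹ = γ₂) ∧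
      ¬ (∃ g : Matrix (Fin 4) (Fin 4) (ZMod ℓ), (∃ m, InGSp4 m g) ∧ g * γ₁ * g⁻¹ = γ₂) :=
  stmt9_general ℓ hodd a ha x hx hns γ₁ γ₂ hγ₁ hγ₂
end
end

section
/- Let ℓ be a prime and m ∈ F_ℓˣ. The set of characteristic polynomials of elements of GSp₄(F_ℓ) with multiplier m is exactly { T⁴ + c₃T³ + c₂T² + m·c₃·T + m² : c₃, c₂ ∈ F_ℓ }. In particular, exactly ℓ² distinct polynomials occur as characteristic polynomials of elements of GSp₄(F_ℓ)^{(m)}. -/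
open Matrix Polynomial

noncomputable section

/-!
If `γᵀ J γ = m J` with `m` a unit, then `m γ⁻¹ = -J γᵀ J` is similar to `γᵀ`, so
`tr γ = m · tr γ⁻¹`. For an invertible `4 × 4` matrix the `X`-coefficient of the characteristic
polynomial is `-det γ · tr γ⁻¹`, and `det γ = m²`: taking determinants gives only
`(det γ)² = m⁴`, but the Pfaffian satisfies `Pf(γᵀ J γ) = -det γ` and `Pf(m J) = -m²`. Hence the
`X`-coefficient is `m` times the `X³`-coefficient. Conversely each `X⁴ + aX³ + bX² + maX + m²` is
the characteristic polynomial of an explicit similitude, and `(a, b)` is read off from its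
coefficients, which gives `ℓ²` polynomials over `𝔽_ℓ`.
-/

namespace Matrix

variable {n R : Type*} [Fintype n] [DecidableEq n] [CommRing R]

theorem charpolyRev_eq_of_isUnit {A : Matrix n n R} (hA : IsUnit A) :
    A.charpolyRev = C ((-1) ^ Fintype.card n * A.det) * A⁻¹.charpoly := by
  have hdet : C A.det * C (Ring.inverse A.det) = 1 := by
    rw [← C_mul, Ring.mul_inverse_cancel _ ((isUnit_iff_isUnit_det A).mp hA), C_1]
  have hsign : ((-1 : R[X]) ^ Fintype.card n) ^ 2 = 1 := by
    rw [← pow_mul, mul_comm, pow_mul, neg_one_sq, one_pow]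
  rw [charpoly_inv A hA, C_mul, C_pow, C_neg, C_1]
  linear_combination (-((-1 : R[X]) ^ Fintype.card n) ^ 2 * A.charpolyRev) * hdet -
    A.charpolyRev * hsign

theorem coeff_one_charpoly_of_isUnit [Nonempty n] {A : Matrix n n R} (hA : IsUnit A) :
    A.charpoly.coeff 1 = (-1) ^ (Fintype.card n + 1) * A.det * trace A⁻¹ := by
  nontriviality R
  have hrev : revAt (Fintype.card n) (Fintype.card n - 1) = 1 := by
    have : 1 ≤ Fintype.card n := Fintype.card_pos
    rw [revAt_le (Nat.sub_le _ _)]; omega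
  have hcoeff : A.charpoly.coeff 1 = A.charpoly.reverse.coeff (Fintype.card n - 1) := by
    rw [coeff_reverse, charpoly_natDegree_eq_dim, hrev]
  rw [hcoeff, reverse_charpoly, charpolyRev_eq_of_isUnit hA, coeff_C_mul,
    trace_eq_neg_charpoly_coeff]
  ring

end Matrix

theorem Polynomial.Monic.eq_of_natDegree_eq_four {R : Type*} [CommSemiring R] {p : R[X]}
    (hp : p.Monic) (hdeg : p.natDegree = 4) :
    p = X ^ 4 + C (p.coeff 3) * X ^ 3 + C (p.coeff 2) * X ^ 2 + C (p.coeff 1) * X +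
      C (p.coeff 0) := by
  have hc4 : p.coeff 4 = 1 := hdeg ▸ hp.coeff_natDegree
  conv_lhs => rw [p.as_sum_range_C_mul_X_pow, hdeg]
  simp only [Finset.sum_range_succ, Finset.sum_range_zero, hc4, C_1]
  ring

section GSp4

variable {R : Type*} [CommRing R]

def pfaffian4 (A : Matrix (Fin 4) (Fin 4) R) : R :=
  A 0 1 * A 2 3 - A 0 2 * A 1 3 + A 0 3 * A 1 2

theorem pfaffian4_transpose_mul_J4_mul (B : Matrix (Fin 4) (Fin 4) R) :
    pfaffian4 (Bᵀ * J4 R * B) = -B.det := by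
  simp [pfaffian4, J4, det_succ_row_zero, Fin.sum_univ_succ, submatrix_apply, Fin.succAbove,
    mul_apply]
  ring

theorem pfaffian4_smul_J4 (c : R) : pfaffian4 (c • J4 R) = -c ^ 2 := by
  simp [pfaffian4, J4]
  ring

variable {m : R} {γ : Matrix (Fin 4) (Fin 4) R}

theorem det_eq_sq_of_transpose_mul_J4_mul (h : γᵀ * J4 R * γ = m • J4 R) :
    γ.det = m ^ 2 := by
  have hpf := pfaffian4_transpose_mul_J4_mul γ
  rw [h, pfaffian4_smul_J4, neg_inj] at hpf
  exact hpf.symm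

theorem smul_inv_eq_of_transpose_mul_J4_mul (hγ : IsUnit γ) (h : γᵀ * J4 R * γ = m • J4 R) :
    m • γ⁻¹ = -(J4 R * γᵀ * J4 R) := by
  have hinv : γ * γ⁻¹ = 1 := mul_nonsing_inv γ ((isUnit_iff_isUnit_det γ).mp hγ)
  calc m • γ⁻¹ = -(J4 R * (m • J4 R) * γ⁻¹) := by
        rw [mul_smul_comm, J4_mul_J4, smul_mul_assoc, neg_one_mul, smul_neg, neg_neg]
    _ = -(J4 R * γᵀ * J4 R) := by
        simp only [← h, mul_assoc, hinv, mul_one]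

theorem trace_eq_mul_trace_inv_of_transpose_mul_J4_mul (hγ : IsUnit γ)
    (h : γᵀ * J4 R * γ = m • J4 R) : trace γ = m * trace γ⁻¹ := by
  rw [← smul_eq_mul, ← trace_smul, smul_inv_eq_of_transpose_mul_J4_mul hγ h, trace_neg,
    trace_mul_cycle, J4_mul_J4, neg_one_mul, trace_neg, neg_neg, trace_transpose]

def gsp4Charpoly (m a b : R) : R[X] :=
  X ^ 4 + C a * X ^ 3 + C b * X ^ 2 + C (m * a) * X + C (m ^ 2)

theorem gsp4Charpoly_injective (m : R) :
    Function.Injective fun c : R × R => gsp4Charpoly m c.1 c.2 := by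
  rintro ⟨a, b⟩ ⟨a', b'⟩ h
  exact Prod.ext (by simpa [gsp4Charpoly] using congrArg (coeff · 3) h)
    (by simpa [gsp4Charpoly] using congrArg (coeff · 2) h)

theorem charpoly_eq_gsp4Charpoly_of_inGSp4 (h : InGSp4 m γ) :
    γ.charpoly = gsp4Charpoly m (-trace γ) (γ.charpoly.coeff 2) := by
  nontriviality R
  obtain ⟨hγ, -, hform⟩ := h
  have hdet := det_eq_sq_of_transpose_mul_J4_mul hform
  have hc3 : γ.charpoly.coeff 3 = -trace γ := by
    simp [trace_eq_neg_charpoly_coeff γ]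
  have hc1 : γ.charpoly.coeff 1 = m * -trace γ := by
    rw [coeff_one_charpoly_of_isUnit hγ, hdet,
      trace_eq_mul_trace_inv_of_transpose_mul_J4_mul hγ hform, Fintype.card_fin]
    ring
  have hc0 : γ.charpoly.coeff 0 = m ^ 2 := by
    have hsign := det_eq_sign_charpoly_coeff γ
    norm_num [hdet] at hsign
    exact hsign.symm
  have hdeg : γ.charpoly.natDegree = 4 := by
    rw [charpoly_natDegree_eq_dim, Fintype.card_fin]
  conv_lhs => rw [(charpoly_monic γ).eq_of_natDegree_eq_four hdeg, hc3, hc1, hc0]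
  rfl

/-- The companion-type similitude `!![0,0,0,-m; 1,0,0,-a; 0,1,-a,-b/m; 0,0,m,0]`, conjugated by
`diag(m, 1, 1, m)` to avoid dividing by `m`. -/
def gsp4Companion (m a b : R) : Matrix (Fin 4) (Fin 4) R :=
  !![0, 0, 0, -m; m, 0, 0, -m * a; 0, 1, -a, -b; 0, 0, 1, 0]

theorem det_gsp4Companion (m a b : R) : (gsp4Companion m a b).det = m ^ 2 := by
  simp [gsp4Companion, det_succ_row_zero, Fin.sum_univ_succ, submatrix_apply, Fin.succAbove]
  ring

theorem inGSp4_gsp4Companion (hm : IsUnit m) (a b : R) :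
    InGSp4 m (gsp4Companion m a b) := by
  refine ⟨?_, hm, ?_⟩
  · rw [isUnit_iff_isUnit_det, det_gsp4Companion]
    exact hm.pow 2
  · ext i j
    fin_cases i <;> fin_cases j <;> simp [gsp4Companion, J4, mul_apply, Fin.sum_univ_four] <;> ring

theorem charpoly_gsp4Companion (m a b : R) :
    (gsp4Companion m a b).charpoly = gsp4Charpoly m a b := by
  simp [gsp4Companion, gsp4Charpoly, charpoly, charmatrix_apply, det_succ_row_zero,
    Fin.sum_univ_succ, submatrix_apply, Fin.succAbove, diagonal_apply]
  ring

theorem setOf_charpoly_inGSp4 (hm : IsUnit m) :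
    {p : R[X] | ∃ γ : Matrix (Fin 4) (Fin 4) R, InGSp4 m γ ∧ γ.charpoly = p} =
      Set.range fun c : R × R => gsp4Charpoly m c.1 c.2 := by
  ext p
  constructor
  · rintro ⟨γ, hγ, rfl⟩
    exact ⟨(-trace γ, γ.charpoly.coeff 2), (charpoly_eq_gsp4Charpoly_of_inGSp4 hγ).symm⟩
  · rintro ⟨⟨a, b⟩, rfl⟩
    exact ⟨_, inGSp4_gsp4Companion hm a b, charpoly_gsp4Companion m a b⟩

end GSp4

theorem stmt11_general (ℓ : ℕ) [Fact ℓ.Prime]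
    (m : ZMod ℓ) (hm : m ≠ 0) :
    {p : Polynomial (ZMod ℓ) | ∃ γ : Matrix (Fin 4) (Fin 4) (ZMod ℓ),
        InGSp4 m γ ∧ γ.charpoly = p} =
      {p : Polynomial (ZMod ℓ) | ∃ c₃ c₂ : ZMod ℓ,
        p = X ^ 4 + C c₃ * X ^ 3 + C c₂ * X ^ 2 + C (m * c₃) * X + C (m ^ 2)} ∧
    Nat.card {p : Polynomial (ZMod ℓ) | ∃ γ : Matrix (Fin 4) (Fin 4) (ZMod ℓ),
        InGSp4 m γ ∧ γ.charpoly = p} = ℓ ^ 2 := by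
  rw [setOf_charpoly_inGSp4 hm.isUnit]
  constructor
  · ext p
    simp [gsp4Charpoly, eq_comm]
  · rw [Nat.card_range_of_injective (gsp4Charpoly_injective m), Nat.card_prod, Nat.card_zmod, sq]

theorem stmt11 (ℓ : ℕ) (hℓ : ℓ.Prime) [Fact ℓ.Prime]
    (m : ZMod ℓ) (hm : m ≠ 0) :
    {p : Polynomial (ZMod ℓ) | ∃ γ : Matrix (Fin 4) (Fin 4) (ZMod ℓ),
        InGSp4 m γ ∧ γ.charpoly = p} =
      {p : Polynomial (ZMod ℓ) | ∃ c₃ c₂ : ZMod ℓ,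
        p = X ^ 4 + C c₃ * X ^ 3 + C c₂ * X ^ 2 + C (m * c₃) * X + C (m ^ 2)} ∧
    Nat.card {p : Polynomial (ZMod ℓ) | ∃ γ : Matrix (Fin 4) (Fin 4) (ZMod ℓ),
        InGSp4 m γ ∧ γ.charpoly = p} = ℓ ^ 2 :=
  stmt11_general ℓ m hm
end
end

section
/- Let ℓ be a prime and let γ ∈ GSp₄(F_ℓ) have characteristic polynomial f irreducible over F_ℓ. Let t be a root of f in the field F_{ℓ⁴} with ℓ⁴ elements. Then t^{ℓ²+1} equals (the image in F_{ℓ⁴} of) the multiplier m(γ); that is, the multiplier is the norm of t from F_{ℓ⁴} to F_{ℓ²}. -/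
/-!
If `γᵀ J γ = m J`, then `(t • 1 - γᵀ) (J γ) = -t • J ((m / t) • 1 - γ)`, so along with `t` also
`m / t` is a root of the characteristic polynomial `f`. As `f` is irreducible, `m / t = σ t` for
some `σ ∈ Gal(F_{ℓ⁴}/F_ℓ)`. Applying `σ` to `t · σ t = m` gives `σ² t = t`, hence `σ² = 1` since
`t` generates `F_{ℓ⁴}`; and `σ ≠ 1`, as otherwise `t² = m` would have degree at most `2`. So `σ` is
the unique involution `x ↦ x ^ ℓ²` of the cyclic Galois group of order `4`.
-/

open Matrix Polynomial

noncomputable section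

open IntermediateField

theorem Matrix.isRoot_charpoly_div_of_transpose_mul_mul_eq_smul {n K : Type*} [Fintype n]
    [DecidableEq n] [Field K] {A J : Matrix n n K} {c x : K} (hJ : J.det ≠ 0)
    (hA : Aᵀ * J * A = c • J) (hx : x ≠ 0) (h : A.charpoly.IsRoot x) :
    A.charpoly.IsRoot (c / x) := by
  simp only [IsRoot, eval_charpoly, scalar_apply, ← smul_one_eq_diagonal] at h ⊢
  have key : (x • 1 - Aᵀ) * (J * A) = (-x) • (J * ((c / x) • 1 - A)) := by
    rw [sub_mul, ← Matrix.mul_assoc Aᵀ, hA, Matrix.mul_sub, Matrix.smul_mul, Matrix.one_mul,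
      Matrix.mul_smul, Matrix.mul_one, smul_sub, smul_smul, neg_mul, mul_div_cancel₀ _ hx]
    module
  have hdet := congrArg det key
  rw [det_mul, det_smul, ← transpose_one, ← transpose_smul, ← transpose_sub, det_transpose, h,
    zero_mul, eq_comm] at hdet
  simpa [hJ, hx] using hdet

namespace FiniteField

variable {K L : Type*} [Field K] [Field L] [Finite L] [Algebra K L]

theorem eq_one_of_apply_eq_self_of_natDegree_minpoly_eq_finrank {t : L}
    (ht : (minpoly K t).natDegree = Module.finrank K L) {τ : Gal(L/K)} (hτ : τ t = t) :
    τ = 1 := by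
  have htop := (Field.primitive_element_iff_minpoly_natDegree_eq K t).2 ht
  rw [← toSubalgebra_inj, adjoin_simple_toSubalgebra_of_isAlgebraic (.of_finite K t),
    top_toSubalgebra] at htop
  exact AlgEquiv.coe_toAlgHom_injective (AlgHom.ext_of_adjoin_eq_top htop (by simpa using hτ))

variable [Fintype K]

theorem eq_frobenius_pow_of_sq_eq_one {n : ℕ} (hn : Module.finrank K L = 2 * n)
    {σ : Gal(L/K)} (hσ : σ ^ 2 = 1) (hσ1 : σ ≠ 1) :
    σ = frobeniusAlgEquivOfAlgebraic K L ^ n := by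
  obtain ⟨⟨k, hk⟩, rfl⟩ := (bijective_frobeniusAlgEquivOfAlgebraic_pow K L).2 σ
  dsimp only at hσ hσ1 ⊢
  rw [hn] at hk
  rw [← pow_mul, ← orderOf_dvd_iff_pow_eq_one, orderOf_frobeniusAlgEquivOfAlgebraic, hn] at hσ
  obtain ⟨j, hj⟩ := hσ
  have hj2 : j < 2 := by nlinarith
  interval_cases j
  · simp_all
  · congr 1; omega

theorem mul_pow_card_pow_eq_of_isConjRoot {n : ℕ} (hn : 1 < n)
    (hL : Module.finrank K L = 2 * n) {t : L} (ht : (minpoly K t).natDegree = 2 * n) {c : K}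
    (hc : IsConjRoot K t (algebraMap K L c / t)) :
    t * t ^ (Fintype.card K ^ n) = algebraMap K L c := by
  have ht0 : t ≠ 0 := by rintro rfl; simp at ht; omega
  obtain ⟨σ, hσ⟩ := hc.symm.exists_algEquiv
  have hprod : t * σ t = algebraMap K L c := by rw [hσ, mul_div_cancel₀ _ ht0]
  have hσ2 : σ ^ 2 = 1 := by
    refine eq_one_of_apply_eq_self_of_natDegree_minpoly_eq_finrank (ht.trans hL.symm) ?_
    have h := congrArg σ hprod
    rw [map_mul, AlgEquiv.commutes, ← hprod, mul_comm] at h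
    rw [pow_two, AlgEquiv.mul_apply]
    exact mul_right_cancel₀ (by simpa using ht0) h
  have hσ1 : σ ≠ 1 := by
    rintro rfl
    have hdvd : minpoly K t ∣ X ^ 2 - C c := minpoly.dvd K t (by simp [← hprod, pow_two])
    have := natDegree_le_of_dvd hdvd (X_pow_sub_C_ne_zero two_pos c)
    rw [ht, natDegree_X_pow_sub_C] at this
    omega
  rw [← hprod, eq_frobenius_pow_of_sq_eq_one hL hσ2 hσ1, AlgEquiv.coe_pow,
    coe_frobeniusAlgEquivOfAlgebraic_iterate]

end FiniteField

theorem map_J4 {k l : Type*} [CommRing k] [CommRing l] (f : k →+* l) : (J4 k).map f = J4 l := by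
  ext i j
  fin_cases i <;> fin_cases j <;> simp [J4]

theorem det_J4 (k : Type*) [CommRing k] : (J4 k).det = 1 := by
  simp [J4, det_succ_row_zero, Fin.sum_univ_succ, Fin.succAbove]

theorem InGSp4.map {k l : Type*} [CommRing k] [CommRing l] (f : k →+* l) {m : k}
    {γ : Matrix (Fin 4) (Fin 4) k} (h : InGSp4 m γ) : InGSp4 (f m) (γ.map f) := by
  obtain ⟨hγ, hm, hrel⟩ := h
  refine ⟨hγ.map f.mapMatrix, hm.map f, ?_⟩
  simpa [Matrix.map_mul, transpose_map, map_J4, Matrix.map_smul'] using congrArg f.mapMatrix hrel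

theorem stmt12_general (ℓ : ℕ) [Fact ℓ.Prime]
    (γ : Matrix (Fin 4) (Fin 4) (ZMod ℓ)) (m : ZMod ℓ) (hγ : InGSp4 m γ)
    (hirr : Irreducible γ.charpoly)
    (F : Type*) [Field F] [Algebra (ZMod ℓ) F] [Fintype F]
    (hF : Fintype.card F = ℓ ^ 4)
    (t : F) (ht : Polynomial.aeval t γ.charpoly = 0) :
    t ^ (ℓ ^ 2 + 1) = algebraMap (ZMod ℓ) F m := by
  have hmin : minpoly (ZMod ℓ) t = γ.charpoly :=
    (minpoly.eq_of_irreducible_of_monic hirr ht γ.charpoly_monic).symm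
  have hdeg : (minpoly (ZMod ℓ) t).natDegree = 2 * 2 := by
    rw [hmin, charpoly_natDegree_eq_dim, Fintype.card_fin]
  have hrank : Module.finrank (ZMod ℓ) F = 2 * 2 := by
    have hcard := Module.card_eq_pow_finrank (K := ZMod ℓ) (V := F)
    rw [ZMod.card, hF] at hcard
    exact Nat.pow_right_injective (Fact.out : ℓ.Prime).two_le hcard.symm
  have ht0 : t ≠ 0 := by rintro rfl; simp at hdeg
  have hroot : (γ.map (algebraMap (ZMod ℓ) F)).charpoly.IsRoot (algebraMap (ZMod ℓ) F m / t) :=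
    isRoot_charpoly_div_of_transpose_mul_mul_eq_smul (by simp [det_J4]) (hγ.map _).2.2 ht0
      (by rwa [charpoly_map, IsRoot, eval_map_algebraMap])
  rw [charpoly_map, IsRoot, eval_map_algebraMap, ← hmin] at hroot
  have hconj := isConjRoot_of_aeval_eq_zero (.of_finite (ZMod ℓ) t) hroot
  have hnorm := FiniteField.mul_pow_card_pow_eq_of_isConjRoot one_lt_two hrank hdeg hconj
  rwa [ZMod.card, ← pow_succ'] at hnorm

theorem stmt12 (ℓ : ℕ) (hℓ : ℓ.Prime) [Fact ℓ.Prime]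
    (γ : Matrix (Fin 4) (Fin 4) (ZMod ℓ)) (m : ZMod ℓ) (hγ : InGSp4 m γ)
    (hirr : Irreducible γ.charpoly)
    (F : Type*) [Field F] [Algebra (ZMod ℓ) F] [Fintype F]
    (hF : Fintype.card F = ℓ ^ 4)
    (t : F) (ht : Polynomial.aeval t γ.charpoly = 0) :
    t ^ (ℓ ^ 2 + 1) = algebraMap (ZMod ℓ) F m :=
  stmt12_general ℓ γ m hγ hirr F hF t ht
end
end

section
/- Let p be a prime, e ≥ 1, q = p^e, and let a, b ∈ ℤ with p not dividing b. Suppose f(T) = T⁴ − aT³ + bT² − qaT + q² is irreducible over ℚ and every complex root of f has absolute value √q. Let K = ℚ[T]/(f(T)), let ϖ ∈ K be the image of T, and set ϖ̄ = q/ϖ ∈ K. Then the subring ℤ[ϖ] has index q as an additive subgroup of the order ℤ[ϖ, ϖ̄] in K. -/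
/-!
From `ϖ * ϖbar = q` and `f(ϖ) = 0` one gets `q ϖbar = qa - bϖ + aϖ² - ϖ³` and
`ϖbar² = a(ϖ + ϖbar) - ϖ² - b`. Hence `ℤ[ϖ, ϖbar]` is spanned by `1, ϖ, ϖ², ϖbar`, i.e. it is
`ℤ[ϖ] + ℤ ϖbar`, while `ℤ[ϖ]` is spanned by `1, ϖ, ϖ², ϖ³`. These four powers are linearly
independent because `f` is the minimal polynomial of `ϖ`, so comparing `ϖ³`-coefficients shows
that `k ϖbar ∈ ℤ[ϖ]` exactly when `q ∣ k`, and the quotient is `ℤ/qℤ`.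
-/

open Polynomial

theorem AddSubgroup.relIndex_sup_zmultiples {G : Type*} [AddCommGroup G] (H : AddSubgroup G)
    (x : G) (n : ℕ) (h : ∀ k : ℤ, k • x ∈ H ↔ (n : ℤ) ∣ k) :
    H.relIndex (H ⊔ zmultiples x) = n := by
  have hcomap : H.comap (zmultiplesHom G x) = zmultiples (n : ℤ) := by
    ext k
    simp [h, Int.mem_zmultiples_iff]
  rw [relIndex_sup_left, ← range_zmultiplesHom, ← index_comap, hcomap, Int.index_zmultiples,
    Int.natAbs_natCast]

theorem Algebra.adjoin_le_span_of_mul_mem {R A ι : Type*} [CommSemiring R] [Semiring A]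
    [Algebra R A] {s : Set A} {v : ι → A} (h1 : 1 ∈ Submodule.span R (Set.range v))
    (hmul : ∀ x ∈ s, ∀ i, x * v i ∈ Submodule.span R (Set.range v)) :
    Subalgebra.toSubmodule (adjoin R s) ≤ Submodule.span R (Set.range v) := by
  set M := Submodule.span R (Set.range v)
  suffices h : ∀ x ∈ adjoin R s, ∀ m ∈ M, x * m ∈ M from
    fun x hx => by simpa using h x hx 1 h1
  intro x hx
  induction hx using adjoin_induction with
  | mem x hx =>
    intro m hm
    induction hm using Submodule.span_induction with
    | mem y hy => obtain ⟨i, rfl⟩ := hy; exact hmul x hx i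
    | zero => simp
    | add y z _ _ hy hz => rw [mul_add]; exact add_mem hy hz
    | smul r y _ hy => rw [mul_smul_comm]; exact M.smul_mem r hy
  | algebraMap r => intro m hm; rw [← Algebra.smul_def]; exact M.smul_mem r hm
  | add x y _ _ hx hy => intro m hm; rw [add_mul]; exact add_mem (hx m hm) (hy m hm)
  | mul x y _ _ hx hy => intro m hm; rw [mul_assoc]; exact hx _ (hy m hm)

namespace WeilQuartic

open Submodule

variable {K : Type*} [CommRing K] {a b : ℤ} {q : ℕ} {ϖ ϖbar : K}

theorem mem_span_range_fin_four_iff {v₀ v₁ v₂ v₃ x : K} :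
    x ∈ span ℤ (Set.range ![v₀, v₁, v₂, v₃]) ↔
      ∃ c₀ c₁ c₂ c₃ : ℤ, x = c₀ * v₀ + c₁ * v₁ + c₂ * v₂ + c₃ * v₃ := by
  rw [mem_span_range_iff_exists_fun]
  simp [Fin.sum_univ_four, Fin.exists_fin_succ_pi, zsmul_eq_mul, eq_comm]

theorem adjoin_le_span_pow (hroot : ϖ ^ 4 - a * ϖ ^ 3 + b * ϖ ^ 2 - q * a * ϖ + q ^ 2 = 0) :
    Subalgebra.toSubmodule (Algebra.adjoin ℤ {ϖ}) ≤ span ℤ (Set.range ![1, ϖ, ϖ ^ 2, ϖ ^ 3]) := by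
  refine Algebra.adjoin_le_span_of_mul_mem
    (mem_span_range_fin_four_iff.2 ⟨1, 0, 0, 0, by push_cast; ring⟩) ?_
  rintro x rfl i
  rw [mem_span_range_fin_four_iff]
  fin_cases i
  · exact ⟨0, 1, 0, 0, by push_cast; ring⟩
  · exact ⟨0, 0, 1, 0, by push_cast; ring⟩
  · exact ⟨0, 0, 0, 1, by push_cast; ring⟩
  · exact ⟨-(q ^ 2), q * a, -b, a, by push_cast; linear_combination hroot⟩

variable [IsDomain K]

theorem natCast_mul_bar (hroot : ϖ ^ 4 - a * ϖ ^ 3 + b * ϖ ^ 2 - q * a * ϖ + q ^ 2 = 0)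
    (hbar : ϖ * ϖbar = q) (hϖ : ϖ ≠ 0) :
    q * ϖbar = q * a - b * ϖ + a * ϖ ^ 2 - ϖ ^ 3 :=
  mul_left_cancel₀ hϖ (by linear_combination q * hbar + hroot)

theorem bar_sq (hroot : ϖ ^ 4 - a * ϖ ^ 3 + b * ϖ ^ 2 - q * a * ϖ + q ^ 2 = 0)
    (hbar : ϖ * ϖbar = q) (hϖ : ϖ ≠ 0) :
    ϖbar ^ 2 = a * ϖ + a * ϖbar - ϖ ^ 2 - b :=
  mul_left_cancel₀ (pow_ne_zero 2 hϖ)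
    (by linear_combination (ϖ * ϖbar + q - a * ϖ) * hbar + hroot)

theorem adjoin_pair_le_span (hroot : ϖ ^ 4 - a * ϖ ^ 3 + b * ϖ ^ 2 - q * a * ϖ + q ^ 2 = 0)
    (hbar : ϖ * ϖbar = q) (hϖ : ϖ ≠ 0) :
    Subalgebra.toSubmodule (Algebra.adjoin ℤ {ϖ, ϖbar}) ≤
      span ℤ (Set.range ![1, ϖ, ϖ ^ 2, ϖbar]) := by
  have hqbar := natCast_mul_bar hroot hbar hϖ
  refine Algebra.adjoin_le_span_of_mul_mem
    (mem_span_range_fin_four_iff.2 ⟨1, 0, 0, 0, by push_cast; ring⟩) ?_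
  rintro x (rfl | rfl) i <;> rw [mem_span_range_fin_four_iff] <;> fin_cases i
  · exact ⟨0, 1, 0, 0, by push_cast; ring⟩
  · exact ⟨0, 0, 1, 0, by push_cast; ring⟩
  · exact ⟨q * a, -b, a, -q, by push_cast; linear_combination hqbar⟩
  · exact ⟨q, 0, 0, 0, by push_cast; linear_combination hbar⟩
  · exact ⟨0, 0, 0, 1, by push_cast; ring⟩
  · exact ⟨q, 0, 0, 0, by push_cast; linear_combination hbar⟩
  · exact ⟨0, q, 0, 0, by push_cast; linear_combination ϖ * hbar⟩
  · exact ⟨-b, a, -1, a, by push_cast; linear_combination bar_sq hroot hbar hϖ⟩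

theorem zsmul_bar_mem_adjoin_iff (hroot : ϖ ^ 4 - a * ϖ ^ 3 + b * ϖ ^ 2 - q * a * ϖ + q ^ 2 = 0)
    (hbar : ϖ * ϖbar = q) (hind : LinearIndependent ℤ ![1, ϖ, ϖ ^ 2, ϖ ^ 3]) (k : ℤ) :
    k • ϖbar ∈ Algebra.adjoin ℤ {ϖ} ↔ (q : ℤ) ∣ k := by
  have hqbar := natCast_mul_bar hroot hbar (by simpa using hind.ne_zero 1)
  constructor
  · intro hk
    obtain ⟨c₀, c₁, c₂, c₃, hc⟩ := mem_span_range_fin_four_iff.1 (adjoin_le_span_pow hroot hk)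
    -- `q • (k • ϖbar)` expanded in two ways; its `ϖ³`-coefficients are `q c₃` and `-k`
    have hrel : q * c₃ + k = 0 := Fintype.linearIndependent_iff.1 hind
      ![q * c₀ - k * q * a, q * c₁ + k * b, q * c₂ - k * a, q * c₃ + k]
      (by
        simp only [Fin.sum_univ_four, Matrix.cons_val, zsmul_eq_mul]
        push_cast
        linear_combination -q * hc + k * hqbar) 3
    exact ⟨-c₃, by linear_combination hrel⟩
  · rintro ⟨m, rfl⟩
    have hϖ : ϖ ∈ Algebra.adjoin ℤ {ϖ} := Algebra.self_mem_adjoin_singleton ℤ ϖ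
    have h : (q * m : ℤ) • ϖbar = m * (q * a - b * ϖ + a * ϖ ^ 2 - ϖ ^ 3) := by
      rw [← hqbar]; push_cast [zsmul_eq_mul]; ring
    rw [h]
    exact mul_mem (intCast_mem _ m) (sub_mem (add_mem (sub_mem
      (mul_mem (natCast_mem _ q) (intCast_mem _ a)) (mul_mem (intCast_mem _ b) hϖ))
      (mul_mem (intCast_mem _ a) (pow_mem hϖ 2))) (pow_mem hϖ 3))

theorem toAddSubgroup_adjoin_pair (hroot : ϖ ^ 4 - a * ϖ ^ 3 + b * ϖ ^ 2 - q * a * ϖ + q ^ 2 = 0)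
    (hbar : ϖ * ϖbar = q) (hϖ : ϖ ≠ 0) :
    (Algebra.adjoin ℤ {ϖ, ϖbar}).toSubring.toAddSubgroup =
      (Algebra.adjoin ℤ {ϖ}).toSubring.toAddSubgroup ⊔ AddSubgroup.zmultiples ϖbar := by
  have hϖ_mem : ϖ ∈ Algebra.adjoin ℤ {ϖ} := Algebra.self_mem_adjoin_singleton ℤ ϖ
  apply le_antisymm
  · intro x hx
    have hx' : x ∈ (span ℤ (Set.range ![1, ϖ, ϖ ^ 2, ϖbar])).toAddSubgroup :=
      adjoin_pair_le_span hroot hbar hϖ hx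
    rw [span_int_eq_addSubgroupClosure] at hx'
    refine (AddSubgroup.closure_le _).2 ?_ hx'
    rintro _ ⟨i, rfl⟩
    fin_cases i
    · exact AddSubgroup.mem_sup_left (one_mem (Algebra.adjoin ℤ {ϖ}))
    · exact AddSubgroup.mem_sup_left hϖ_mem
    · exact AddSubgroup.mem_sup_left (pow_mem hϖ_mem 2)
    · exact AddSubgroup.mem_sup_right (AddSubgroup.mem_zmultiples ϖbar)
  · refine sup_le (fun x hx => Algebra.adjoin_mono (Set.singleton_subset_iff.2
      (Set.mem_insert _ _)) hx) (AddSubgroup.zmultiples_le.2 ?_)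
    exact Algebra.subset_adjoin (Set.mem_insert_of_mem _ rfl)

end WeilQuartic

theorem stmt14_general (q : ℕ)
    (a b : ℤ)
    (f : ℚ[X])
    (hf : f = X ^ 4 - C (a : ℚ) * X ^ 3 + C (b : ℚ) * X ^ 2
        - C ((q : ℚ) * (a : ℚ)) * X + C ((q : ℚ) ^ 2))
    (hirr : Irreducible f)
    (K : Type*) [Field K] [Algebra ℚ K]
    (ϖ : K) (hϖ : Polynomial.aeval ϖ f = 0)
    (ϖbar : K) (hbar : ϖ * ϖbar = (q : K)) :
    AddSubgroup.relIndex
      (Algebra.adjoin ℤ {ϖ}).toSubring.toAddSubgroup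
      (Algebra.adjoin ℤ {ϖ, ϖbar}).toSubring.toAddSubgroup = q := by
  have hmonic : f.Monic := by subst hf; monicity!
  have hdeg : (minpoly ℚ ϖ).natDegree = 4 := by
    rw [← minpoly.eq_of_irreducible_of_monic hirr hϖ hmonic, hf]; compute_degree!
  have hind : LinearIndependent ℤ ![1, ϖ, ϖ ^ 2, ϖ ^ 3] := by
    convert (hdeg ▸ linearIndependent_pow ϖ).restrict_scalars' ℤ using 1
    ext i; fin_cases i <;> simp
  have hroot : ϖ ^ 4 - a * ϖ ^ 3 + b * ϖ ^ 2 - q * a * ϖ + q ^ 2 = 0 := by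
    simpa [hf] using hϖ
  rw [WeilQuartic.toAddSubgroup_adjoin_pair hroot hbar (by simpa using hind.ne_zero 1)]
  exact AddSubgroup.relIndex_sup_zmultiples _ _ _
    (WeilQuartic.zsmul_bar_mem_adjoin_iff hroot hbar hind)

theorem stmt14 (p : ℕ) (hp : p.Prime) (e : ℕ) (he : 1 ≤ e) (q : ℕ) (hq : q = p ^ e)
    (a b : ℤ) (hb : ¬ (p : ℤ) ∣ b)
    (f : ℚ[X])
    (hf : f = X ^ 4 - C (a : ℚ) * X ^ 3 + C (b : ℚ) * X ^ 2
        - C ((q : ℚ) * (a : ℚ)) * X + C ((q : ℚ) ^ 2))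
    (hirr : Irreducible f)
    (hroots : ∀ z : ℂ, Polynomial.aeval z f = 0 → ‖z‖ = Real.sqrt q)
    (K : Type*) [Field K] [Algebra ℚ K]
    (ϖ : K) (hϖ : Polynomial.aeval ϖ f = 0)
    (hgen : Algebra.adjoin ℚ {ϖ} = ⊤)
    (ϖbar : K) (hbar : ϖ * ϖbar = (q : K)) :
    AddSubgroup.relIndex
      (Algebra.adjoin ℤ {ϖ}).toSubring.toAddSubgroup
      (Algebra.adjoin ℤ {ϖ, ϖbar}).toSubring.toAddSubgroup = q :=
  stmt14_general q a b f hf hirr K ϖ hϖ ϖbar hbar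
end

section
/- Let p be a prime, e ≥ 1, q = p^e, and let f(T) = T⁴ − aT³ + bT² − qaT + q² ∈ ℤ[T] be irreducible over ℚ with all complex roots of absolute value √q. Let K = ℚ[T]/(f(T)), ϖ ∈ K the image of T, ϖ̄ = q/ϖ, and suppose the order ℤ[ϖ, ϖ̄] is the full ring of integers 𝒪_K of K. Then ℤ[ϖ + ϖ̄] is the ring of integers of the subfield K⁺ = ℚ(ϖ + ϖ̄) of K; that is, ℤ[ϖ + ϖ̄] equals the integral closure of ℤ in ℚ(ϖ + ϖ̄). -/
open Polynomial IntermediateField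

/-
Write t = ϖ + ϖ̄. Since ϖ² = tϖ − q, every element of ℤ[ϖ, ϖ̄] has the form u + vϖ with
u, v ∈ ℤ[t]. Dividing f(ϖ) by ϖ² shows that t is a root of f⁺, so ℚ(t) has degree at most 2
while ϖ has degree 4; hence ϖ ∉ ℚ(t). An integral element x = u + vϖ of ℚ(t) therefore has
v = 0, i.e. x ∈ ℤ[t].
-/

theorem exists_eq_add_mul_of_mem_adjoin_pair {R A : Type*} [CommRing R] [CommRing A]
    [Algebra R A] {ϖ ϖbar : A} {n : R} (hn : ϖ * ϖbar = algebraMap R A n) {x : A}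
    (hx : x ∈ Algebra.adjoin R {ϖ, ϖbar}) :
    ∃ u ∈ Algebra.adjoin R {ϖ + ϖbar}, ∃ v ∈ Algebra.adjoin R {ϖ + ϖbar}, x = u + v * ϖ := by
  set S := Algebra.adjoin R {ϖ + ϖbar}
  have ht : ϖ + ϖbar ∈ S := Algebra.self_mem_adjoin_singleton R _
  induction hx using Algebra.adjoin_induction with
  | mem z hz =>
    rcases hz with rfl | rfl
    · exact ⟨0, S.zero_mem, 1, S.one_mem, by ring⟩
    · exact ⟨_, ht, -1, S.neg_mem S.one_mem, by ring⟩
  | algebraMap r => exact ⟨_, S.algebraMap_mem r, 0, S.zero_mem, by ring⟩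
  | add _ _ _ _ hx hy =>
    obtain ⟨u, hu, v, hv, rfl⟩ := hx
    obtain ⟨u', hu', v', hv', rfl⟩ := hy
    exact ⟨u + u', S.add_mem hu hu', v + v', S.add_mem hv hv', by ring⟩
  | mul _ _ _ _ hx hy =>
    obtain ⟨u, hu, v, hv, rfl⟩ := hx
    obtain ⟨u', hu', v', hv', rfl⟩ := hy
    -- ϖ² = (ϖ + ϖbar) ϖ − n
    refine ⟨u * u' - algebraMap R A n * (v * v'),
      S.sub_mem (S.mul_mem hu hu') (S.mul_mem (S.algebraMap_mem n) (S.mul_mem hv hv')),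
      u * v' + v * u' + v * v' * (ϖ + ϖbar),
      S.add_mem (S.add_mem (S.mul_mem hu hv') (S.mul_mem hv hu'))
        (S.mul_mem (S.mul_mem hv hv') ht), ?_⟩
    linear_combination -(v * v') * hn

theorem mem_adjoin_simple_of_mem_adjoin_int {F K : Type*} [Field F] [Field K] [Algebra F K]
    {t x : K} (hx : x ∈ Algebra.adjoin ℤ {t}) : x ∈ F⟮t⟯ :=
  Algebra.adjoin_le (S := F⟮t⟯.toSubalgebra.restrictScalars ℤ) (subset_adjoin F {t}) hx

theorem mem_adjoin_add_of_mem_adjoin_pair {F K : Type*} [Field F] [Field K] [Algebra F K]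
    {ϖ ϖbar : K} {n : ℤ} (hn : ϖ * ϖbar = n) (hϖ : ϖ ∉ F⟮ϖ + ϖbar⟯) {x : K}
    (hx : x ∈ Algebra.adjoin ℤ {ϖ, ϖbar}) (hxt : x ∈ F⟮ϖ + ϖbar⟯) :
    x ∈ Algebra.adjoin ℤ {ϖ + ϖbar} := by
  obtain ⟨u, hu, v, hv, rfl⟩ :=
    exists_eq_add_mul_of_mem_adjoin_pair (by rwa [eq_intCast]) hx
  obtain rfl : v = 0 := by
    by_contra hv0
    refine hϖ ?_
    have hmem : (u + v * ϖ - u) / v ∈ F⟮ϖ + ϖbar⟯ :=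
      div_mem (sub_mem hxt (mem_adjoin_simple_of_mem_adjoin_int hu))
        (mem_adjoin_simple_of_mem_adjoin_int hv)
    rwa [add_sub_cancel_left, mul_div_cancel_left₀ _ hv0] at hmem
  simpa using hu

theorem notMem_adjoin_simple_of_natDegree_minpoly_lt {F K : Type*} [Field F] [Field K]
    [Algebra F K] {x y : K} (hy : IsIntegral F y)
    (h : (minpoly F y).natDegree < (minpoly F x).natDegree) : x ∉ F⟮y⟯ := by
  intro hx
  have : FiniteDimensional F F⟮y⟯ := adjoin.finiteDimensional hy
  have := minpoly.natDegree_le (A := F) (⟨x, hx⟩ : F⟮y⟯)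
  rw [minpoly_eq, adjoin.finrank hy] at this
  exact this.not_gt h

noncomputable section Weil

variable (q : ℕ) (a b : ℤ)

def weilQuartic : ℚ[X] :=
  X ^ 4 - C (a : ℚ) * X ^ 3 + C (b : ℚ) * X ^ 2 - C ((q : ℚ) * (a : ℚ)) * X + C ((q : ℚ) ^ 2)

def weilQuadratic : ℚ[X] :=
  X ^ 2 - C (a : ℚ) * X + C ((b : ℚ) - 2 * q)

theorem monic_weilQuartic : (weilQuartic q a b).Monic := by
  unfold weilQuartic; monicity!

theorem natDegree_weilQuartic : (weilQuartic q a b).natDegree = 4 := by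
  unfold weilQuartic; compute_degree!

theorem monic_weilQuadratic : (weilQuadratic q a b).Monic := by
  unfold weilQuadratic; monicity!

theorem natDegree_weilQuadratic : (weilQuadratic q a b).natDegree = 2 := by
  unfold weilQuadratic; compute_degree!

variable {q a b}

theorem aeval_weilQuartic {A : Type*} [CommRing A] [Algebra ℚ A] {ϖ ϖbar : A}
    (hq : ϖ * ϖbar = q) :
    aeval ϖ (weilQuartic q a b) = ϖ ^ 2 * aeval (ϖ + ϖbar) (weilQuadratic q a b) := by
  simp only [weilQuartic, weilQuadratic, map_add, map_sub, map_mul, map_pow, aeval_X,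
    map_natCast, map_intCast, map_ofNat]
  linear_combination (a * ϖ - 2 * ϖ ^ 2 - ϖ * ϖbar - q) * hq

theorem notMem_adjoin_add_of_irreducible_weilQuartic {K : Type*} [Field K] [Algebra ℚ K]
    {ϖ ϖbar : K} (hirr : Irreducible (weilQuartic q a b))
    (hϖ : aeval ϖ (weilQuartic q a b) = 0) (hq : ϖ * ϖbar = q) (hϖ0 : ϖ ≠ 0) :
    ϖ ∉ ℚ⟮ϖ + ϖbar⟯ := by
  have ht : aeval (ϖ + ϖbar) (weilQuadratic q a b) = 0 := by
    rw [aeval_weilQuartic hq] at hϖ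
    exact (mul_eq_zero.mp hϖ).resolve_left (pow_ne_zero 2 hϖ0)
  refine notMem_adjoin_simple_of_natDegree_minpoly_lt ⟨_, monic_weilQuadratic q a b, ht⟩ ?_
  rw [← minpoly.eq_of_irreducible_of_monic hirr hϖ (monic_weilQuartic q a b),
    natDegree_weilQuartic]
  have := natDegree_le_natDegree (minpoly.min ℚ _ (monic_weilQuadratic q a b) ht)
  rw [natDegree_weilQuadratic] at this
  omega

end Weil

theorem stmt15_general (p : ℕ) (hp : p.Prime) (e : ℕ) (q : ℕ) (hq : q = p ^ e)
    (a b : ℤ)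
    (f : ℚ[X])
    (hf : f = X ^ 4 - C (a : ℚ) * X ^ 3 + C (b : ℚ) * X ^ 2
        - C ((q : ℚ) * (a : ℚ)) * X + C ((q : ℚ) ^ 2))
    (hirr : Irreducible f)
    (K : Type*) [Field K] [Algebra ℚ K]
    (ϖ : K) (hϖ : Polynomial.aeval ϖ f = 0)
    (ϖbar : K) (hbar : ϖ * ϖbar = (q : K))
    (hmax : Algebra.adjoin ℤ {ϖ, ϖbar} = integralClosure ℤ K) :
    ∀ x : K, x ∈ Algebra.adjoin ℤ {ϖ + ϖbar} ↔
      (IsIntegral ℤ x ∧ x ∈ IntermediateField.adjoin ℚ {ϖ + ϖbar}) := by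
  intro x
  subst hf
  have : CharZero K := charZero_of_injective_algebraMap (algebraMap ℚ K).injective
  have hϖ0 : ϖ ≠ 0 :=
    left_ne_zero_of_mul (hbar ▸ Nat.cast_ne_zero.mpr (hq ▸ pow_ne_zero e hp.ne_zero))
  have hϖ_notMem : ϖ ∉ ℚ⟮ϖ + ϖbar⟯ :=
    notMem_adjoin_add_of_irreducible_weilQuartic (q := q) (a := a) (b := b) hirr hϖ hbar hϖ0
  constructor
  · intro hx
    have ht_int : IsIntegral ℤ (ϖ + ϖbar) := by
      rw [← mem_integralClosure_iff, ← hmax]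
      exact add_mem (Algebra.subset_adjoin (by simp)) (Algebra.subset_adjoin (by simp))
    exact ⟨adjoin_le_integralClosure ht_int hx, mem_adjoin_simple_of_mem_adjoin_int hx⟩
  · rintro ⟨hx_int, hx⟩
    exact mem_adjoin_add_of_mem_adjoin_pair (n := q) (by simpa using hbar) hϖ_notMem
      (by rwa [hmax]) hx

theorem stmt15 (p : ℕ) (hp : p.Prime) (e : ℕ) (he : 1 ≤ e) (q : ℕ) (hq : q = p ^ e)
    (a b : ℤ)
    (f : ℚ[X])
    (hf : f = X ^ 4 - C (a : ℚ) * X ^ 3 + C (b : ℚ) * X ^ 2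
        - C ((q : ℚ) * (a : ℚ)) * X + C ((q : ℚ) ^ 2))
    (hirr : Irreducible f)
    (hroots : ∀ z : ℂ, Polynomial.aeval z f = 0 → ‖z‖ = Real.sqrt q)
    (K : Type*) [Field K] [Algebra ℚ K]
    (ϖ : K) (hϖ : Polynomial.aeval ϖ f = 0)
    (hgen : Algebra.adjoin ℚ {ϖ} = ⊤)
    (ϖbar : K) (hbar : ϖ * ϖbar = (q : K))
    (hmax : Algebra.adjoin ℤ {ϖ, ϖbar} = integralClosure ℤ K) :
    ∀ x : K, x ∈ Algebra.adjoin ℤ {ϖ + ϖbar} ↔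
      (IsIntegral ℤ x ∧ x ∈ IntermediateField.adjoin ℚ {ϖ + ϖbar}) :=
  stmt15_general p hp e q hq a b f hf hirr K ϖ hϖ ϖbar hbar hmax
end

section
/- Let p be a prime, e ≥ 1, q = p^e, and let f(T) = T⁴ − aT³ + bT² − qaT + q² ∈ ℤ[T] be irreducible over ℚ with all complex roots of absolute value √q. Let K = ℚ[T]/(f(T)), ϖ ∈ K the image of T, ϖ̄ = q/ϖ, and suppose ℤ[ϖ, ϖ̄] is the full ring of integers 𝒪_K of K. Then for every prime ℓ ≠ p, the inclusion ℤ[ϖ] ⊆ 𝒪_K becomes an isomorphism after localizing at ℓ: for every z ∈ 𝒪_K there exists an integer c not divisible by ℓ with c·z ∈ ℤ[ϖ]. Equivalently, 𝒪_K ⊗ ℤ_(ℓ) ≅ ℤ_(ℓ)[T]/(f(T)). -/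
/-!
From `f(ϖ) = 0` and `ϖ ϖ̄ = q` one gets `q ϖ̄ = a ϖ² + q a - ϖ³ - b ϖ ∈ ℤ[ϖ]`. Hence every monomial
in `ϖ` and `ϖ̄`, and so every element of `ℤ[ϖ, ϖ̄] = 𝒪_K`, is carried into `ℤ[ϖ]` by a power of `q`;
these powers are prime to every `ℓ ≠ p`.
-/

open Polynomial

theorem Subalgebra.exists_pow_smul_mem_of_mem_adjoin_insert {R S : Type*} [CommRing R]
    [CommRing S] [Algebra R S] (A : Subalgebra R S) {r : R} {y : S} (hy : r • y ∈ A)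
    {s : Set S} (hs : s ⊆ A) {w : S} (hw : w ∈ Algebra.adjoin R (insert y s)) :
    ∃ n : ℕ, r ^ n • w ∈ A := by
  induction hw using Algebra.adjoin_induction with
  | mem x hx =>
    rcases hx with rfl | hx
    · exact ⟨1, by simpa using hy⟩
    · exact ⟨0, by rw [pow_zero, one_smul]; exact hs hx⟩
  | algebraMap c => exact ⟨0, by simp⟩
  | add x x' _ _ ihx ihx' =>
    obtain ⟨n, hn⟩ := ihx
    obtain ⟨m, hm⟩ := ihx'
    refine ⟨n + m, ?_⟩
    have : r ^ (n + m) • (x + x') = r ^ m • (r ^ n • x) + r ^ n • (r ^ m • x') := by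
      rw [smul_smul, smul_smul, mul_comm (r ^ m), ← pow_add, ← smul_add]
    rw [this]
    exact add_mem (A.smul_mem hn _) (A.smul_mem hm _)
  | mul x x' _ _ ihx ihx' =>
    obtain ⟨n, hn⟩ := ihx
    obtain ⟨m, hm⟩ := ihx'
    exact ⟨n + m, by rw [pow_add, ← smul_mul_smul_comm]; exact mul_mem hn hm⟩

theorem mul_conj_eq_of_weil_quartic {K : Type*} [CommRing K] [IsDomain K] {a b q : ℤ} {ϖ ϖbar : K}
    (hϖ0 : ϖ ≠ 0) (hf : ϖ ^ 4 - a * ϖ ^ 3 + b * ϖ ^ 2 - q * a * ϖ + q ^ 2 = 0)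
    (hbar : ϖ * ϖbar = q) :
    q * ϖbar = a * ϖ ^ 2 + q * a - ϖ ^ 3 - b * ϖ :=
  mul_left_cancel₀ hϖ0 (by linear_combination (q : K) * hbar + hf)

theorem smul_conj_mem_adjoin_of_weil_quartic {K : Type*} [CommRing K] [IsDomain K] {a b q : ℤ} {ϖ ϖbar : K}
    (hϖ0 : ϖ ≠ 0) (hf : ϖ ^ 4 - a * ϖ ^ 3 + b * ϖ ^ 2 - q * a * ϖ + q ^ 2 = 0)
    (hbar : ϖ * ϖbar = q) :
    q • ϖbar ∈ Algebra.adjoin ℤ {ϖ} := by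
  rw [Algebra.adjoin_singleton_eq_range_aeval]
  refine ⟨C a * X ^ 2 + C (q * a) - X ^ 3 - C b * X, ?_⟩
  simp [zsmul_eq_mul, mul_conj_eq_of_weil_quartic hϖ0 hf hbar]

theorem Int.not_natCast_dvd_pow_of_prime_ne {ℓ p : ℕ} (hℓ : ℓ.Prime) (hp : p.Prime) (hℓp : ℓ ≠ p)
    (k : ℕ) : ¬ (ℓ : ℤ) ∣ (p : ℤ) ^ k := by
  intro h
  have : ℓ ∣ p := hℓ.dvd_of_dvd_pow (Int.natCast_dvd_natCast.mp (by exact_mod_cast h))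
  exact hℓp ((Nat.prime_dvd_prime_iff_eq hℓ hp).mp this)

theorem stmt16_general (p : ℕ) (hp : p.Prime) (e : ℕ) (q : ℕ) (hq : q = p ^ e)
    (a b : ℤ)
    (f : ℚ[X])
    (hf : f = X ^ 4 - C (a : ℚ) * X ^ 3 + C (b : ℚ) * X ^ 2
        - C ((q : ℚ) * (a : ℚ)) * X + C ((q : ℚ) ^ 2))
    (K : Type*) [Field K] [Algebra ℚ K]
    (ϖ : K) (hϖ : Polynomial.aeval ϖ f = 0)
    (ϖbar : K) (hbar : ϖ * ϖbar = (q : K))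
    (hmax : Algebra.adjoin ℤ {ϖ, ϖbar} = integralClosure ℤ K)
    (ℓ : ℕ) (hℓ : ℓ.Prime) (hℓp : ℓ ≠ p) :
    ∀ z : K, IsIntegral ℤ z →
      ∃ c : ℤ, ¬ ((ℓ : ℤ) ∣ c) ∧ c • z ∈ Algebra.adjoin ℤ {ϖ} := by
  intro z hz
  have : CharZero K := charZero_of_injective_algebraMap (algebraMap ℚ K).injective
  have hϖ0 : ϖ ≠ 0 := by
    rintro rfl
    simp only [zero_mul, hq, Nat.cast_pow] at hbar
    exact pow_ne_zero e (Nat.cast_ne_zero.mpr hp.ne_zero) hbar.symm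
  have hfϖ : ϖ ^ 4 - a * ϖ ^ 3 + b * ϖ ^ 2 - ((q : ℤ) : K) * a * ϖ + ((q : ℤ) : K) ^ 2 = 0 := by
    simpa [hf] using hϖ
  have hz' : z ∈ Algebra.adjoin ℤ (insert ϖbar {ϖ}) := by
    rwa [Set.pair_comm, hmax]
  obtain ⟨n, hn⟩ := (Algebra.adjoin ℤ {ϖ}).exists_pow_smul_mem_of_mem_adjoin_insert
    (smul_conj_mem_adjoin_of_weil_quartic hϖ0 hfϖ (by simpa using hbar)) Algebra.subset_adjoin hz'
  refine ⟨(q : ℤ) ^ n, ?_, hn⟩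
  rw [hq, Nat.cast_pow, ← pow_mul]
  exact Int.not_natCast_dvd_pow_of_prime_ne hℓ hp hℓp _

theorem stmt16 (p : ℕ) (hp : p.Prime) (e : ℕ) (he : 1 ≤ e) (q : ℕ) (hq : q = p ^ e)
    (a b : ℤ)
    (f : ℚ[X])
    (hf : f = X ^ 4 - C (a : ℚ) * X ^ 3 + C (b : ℚ) * X ^ 2
        - C ((q : ℚ) * (a : ℚ)) * X + C ((q : ℚ) ^ 2))
    (hirr : Irreducible f)
    (hroots : ∀ z : ℂ, Polynomial.aeval z f = 0 → ‖z‖ = Real.sqrt q)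
    (K : Type*) [Field K] [Algebra ℚ K]
    (ϖ : K) (hϖ : Polynomial.aeval ϖ f = 0)
    (hgen : Algebra.adjoin ℚ {ϖ} = ⊤)
    (ϖbar : K) (hbar : ϖ * ϖbar = (q : K))
    (hmax : Algebra.adjoin ℤ {ϖ, ϖbar} = integralClosure ℤ K)
    (ℓ : ℕ) (hℓ : ℓ.Prime) (hℓp : ℓ ≠ p) :
    ∀ z : K, IsIntegral ℤ z →
      ∃ c : ℤ, ¬ ((ℓ : ℤ) ∣ c) ∧ c • z ∈ Algebra.adjoin ℤ {ϖ} :=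
  stmt16_general p hp e q hq a b f hf K ϖ hϖ ϖbar hbar hmax ℓ hℓ hℓp
end

section
/- Let K be a number field with ring of integers 𝒪_K, let σ be a ℚ-algebra automorphism of K, let q be a nonzero integer, and let ϖ ∈ 𝒪_K satisfy ϖ·σ²(ϖ) = q and σ(ϖ)·σ³(ϖ) = q. Let λ be a prime ideal of 𝒪_K such that σ(λ) = λ and q ∉ λ. If σ²(ϖ) − ϖ ∈ λ and σ(ϖ) − σ²(ϖ) ∉ λ, then ϖ·σ(ϖ) + q ∈ λ. -/
open NumberField

/-- Membership of an element of `K` in (the image of) an ideal of `𝓞 K`. -/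
def inIdeal {K : Type*} [Field K] [NumberField K]
    (P : Ideal (𝓞 K)) (x : K) : Prop :=
  ∃ y ∈ P, (y : K) = x

/-!
Pass to `𝓞 K` and restrict `σ` to an automorphism `τ` of it, writing `ϖᵢ = τⁱ ϖ`. Modulo `λ` we
have `ϖ₂ ≡ ϖ₀`, and applying `τ` (which fixes `λ`) gives `ϖ₃ ≡ ϖ₁`, so `ϖ₀² ≡ ϖ₁² ≡ q`. As
`ϖ₁ ≢ ϖ₂ ≡ ϖ₀` and `𝓞 K / λ` is a domain, `ϖ₀ ≡ -ϖ₁`, whence `ϖ₀ ϖ₁ ≡ -ϖ₁² ≡ -q`.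
-/

theorem mul_add_eq_zero_of_mul_self_eq_of_ne {R : Type*} [CommRing R] [IsDomain R]
    {a b q : R} (ha : a * a = q) (hb : b * b = q) (hab : a ≠ b) : a * b + q = 0 := by
  obtain rfl : a = -b := (mul_self_eq_mul_self_iff.1 (ha.trans hb.symm)).resolve_left hab
  rw [← hb]
  ring

theorem Ideal.mul_add_mem_of_mul_eq_of_mul_eq {R : Type*} [CommRing R] {P : Ideal R}
    [P.IsPrime] {a b c d q : R} (hac : a * c = q) (hbd : b * d = q) (hca : c - a ∈ P)
    (hdb : d - b ∈ P) (hbc : b - c ∉ P) : a * b + q ∈ P := by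
  rw [← Ideal.Quotient.eq] at hca hdb hbc
  rw [← Ideal.Quotient.eq_zero_iff_mem, map_add, map_mul]
  refine mul_add_eq_zero_of_mul_self_eq_of_ne ?_ ?_ (fun h ↦ hbc (h ▸ hca).symm)
  · rw [← hac, map_mul, hca]
  · rw [← hbd, map_mul, hdb]

section

variable {K : Type*} [Field K] [NumberField K]

theorem inIdeal_coe_iff {P : Ideal (𝓞 K)} {z : 𝓞 K} : inIdeal P (z : K) ↔ z ∈ P :=
  ⟨fun ⟨_, hy, hyz⟩ ↦ RingOfIntegers.coe_injective hyz ▸ hy, fun hz ↦ ⟨z, hz, rfl⟩⟩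

theorem RingOfIntegers.coe_galRestrict_apply (σ : K ≃ₐ[ℚ] K) (z : 𝓞 K) :
    ((galRestrict ℤ ℚ K (𝓞 K) σ z : 𝓞 K) : K) = σ z :=
  algebraMap_galRestrict_apply ℤ σ z

theorem galRestrict_mem_of_image_eq {σ : K ≃ₐ[ℚ] K} {P : Ideal (𝓞 K)}
    (hσP : σ '' {x : K | inIdeal P x} = {x : K | inIdeal P x}) {z : 𝓞 K} (hz : z ∈ P) :
    galRestrict ℤ ℚ K (𝓞 K) σ z ∈ P := by
  rw [← inIdeal_coe_iff, RingOfIntegers.coe_galRestrict_apply]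
  change σ (z : K) ∈ {x : K | inIdeal P x}
  rw [← hσP]
  exact Set.mem_image_of_mem σ (inIdeal_coe_iff.2 hz)

end

theorem stmt18_general (K : Type*) [Field K] [NumberField K]
    (σ : K ≃ₐ[ℚ] K) (q : ℤ)
    (ϖ : 𝓞 K)
    (h1 : (ϖ : K) * σ (σ (ϖ : K)) = (q : K))
    (h2 : σ (ϖ : K) * σ (σ (σ (ϖ : K))) = (q : K))
    (P : Ideal (𝓞 K)) (hP : P.IsPrime)
    (hσP : σ '' {x : K | inIdeal P x} = {x : K | inIdeal P x})
    (h3 : inIdeal P (σ (σ (ϖ : K)) - (ϖ : K)))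
    (h4 : ¬ inIdeal P (σ (ϖ : K) - σ (σ (ϖ : K)))) :
    inIdeal P ((ϖ : K) * σ (ϖ : K) + (q : K)) := by
  set τ := galRestrict ℤ ℚ K (𝓞 K) σ
  simp only [← RingOfIntegers.coe_galRestrict_apply] at h1 h2 h3 h4 ⊢
  have hca : τ (τ ϖ) - ϖ ∈ P := by rw [← inIdeal_coe_iff]; exact_mod_cast h3
  have hbc : τ ϖ - τ (τ ϖ) ∉ P := by rw [← inIdeal_coe_iff]; exact_mod_cast h4
  have hdb : τ (τ (τ ϖ)) - τ ϖ ∈ P := by simpa using galRestrict_mem_of_image_eq hσP hca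
  have hmem := Ideal.mul_add_mem_of_mul_eq_of_mul_eq (q := (q : 𝓞 K))
    (RingOfIntegers.coe_injective (by push_cast; exact h1))
    (RingOfIntegers.coe_injective (by push_cast; exact h2)) hca hdb hbc
  exact_mod_cast inIdeal_coe_iff.2 hmem

theorem stmt18 (K : Type*) [Field K] [NumberField K]
    (σ : K ≃ₐ[ℚ] K) (q : ℤ) (hq : q ≠ 0)
    (ϖ : 𝓞 K)
    (h1 : (ϖ : K) * σ (σ (ϖ : K)) = (q : K))
    (h2 : σ (ϖ : K) * σ (σ (σ (ϖ : K))) = (q : K))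
    (P : Ideal (𝓞 K)) (hP : P.IsPrime)
    (hσP : σ '' {x : K | inIdeal P x} = {x : K | inIdeal P x})
    (hqP : ¬ inIdeal P (q : K))
    (h3 : inIdeal P (σ (σ (ϖ : K)) - (ϖ : K)))
    (h4 : ¬ inIdeal P (σ (ϖ : K) - σ (σ (ϖ : K)))) :
    inIdeal P ((ϖ : K) * σ (ϖ : K) + (q : K)) :=
  stmt18_general K σ q ϖ h1 h2 P hP hσP h3 h4
end
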